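/- arXiv:2411.11065 — 8 statements merged into one kernel-verified Lean document; each statement's English description precedes it below -/
import Mathlib

section
/- Let a ∈ ℕ, b ∈ ℤ, c ∈ ℝ with c > 0, and d ∈ ℝ. Set D := a·φ(gcd(a,b))/(c·gcd(a,b)). Then the set of values φ(an+b)/(cn+d), as n ranges over positive integers with n > max{-b/a, -d/c} and φ(an+b)/(cn+d) ≤ D, is dense in the real interval (0, D]. -/
/-!
Write `g = gcd(a, b)` and `D = a φ(g) / (c g)`. For `k` coprime to `a`, Dirichlet's theorem
(applied modulo `a / g`, where `k` is invertible) gives infinitely many primes `q` with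
`a ∣ g k q - b`; for `n = (g k q - b) / a` one has `φ(a n + b) = φ(g) φ(k) (q - 1)`, so the
quotients tend to `D · φ(k) / k` as `q → ∞`. Since `∑ 1/p` diverges, the products
`φ(k) / k = ∏ (1 - 1/p)` over squarefree `k` with large prime factors fill `(0, 1]` densely:
walk through the primes above `max a ⌈1/ε⌉` until the product first drops below the target.
The constraint `y ≤ D` is harmless on the open interval `(0, D)`, whose closure contains `(0, D]`.
-/

open Filter Topology Set

theorem exists_mem_Ico_of_tendsto_zero {u : ℕ → ℝ} {t ε : ℝ} (ht : 0 < t) (hu₀ : t ≤ u 0)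
    (hu : Tendsto u atTop (𝓝 0)) (hstep : ∀ j, u j - u (j + 1) < ε) :
    ∃ j, u j ∈ Ico t (t + ε) := by
  classical
  have hex : ∃ j, u j < t := (hu.eventually (gt_mem_nhds ht)).exists
  obtain ⟨j, hj⟩ : ∃ j, Nat.find hex = j + 1 :=
    Nat.exists_eq_succ_of_ne_zero fun h => (Nat.find_spec hex).not_ge (h ▸ hu₀)
  have hjt : t ≤ u j := not_lt.1 (Nat.find_min hex (by omega))
  have hj₁ : u (j + 1) < t := hj ▸ Nat.find_spec hex
  exact ⟨j, hjt, by linarith [hstep j]⟩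

theorem Nat.cast_totient_eq_mul_prod_one_sub_inv (n : ℕ) :
    (n.totient : ℝ) = n * ∏ p ∈ n.primeFactors, (1 - (p : ℝ)⁻¹) := by
  simpa using congrArg (Rat.cast : ℚ → ℝ) (Nat.totient_eq_mul_prod_factors n)

theorem not_summable_one_div_on_primes_gt (M : ℕ) :
    ¬ Summable (indicator {p | p.Prime ∧ M < p} (fun n : ℕ => (1 : ℝ) / n)) := by
  rw [← summable_nat_add_iff (M + 1)]
  convert (summable_nat_add_iff (M + 1)).not.2 not_summable_one_div_on_primes using 3 with n
  have : M < n + (M + 1) := by omega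
  simp [indicator_apply, this]

theorem one_sub_inv_natCast_mem_Icc {p : ℕ} (hp : p ≠ 0) : 1 - (p : ℝ)⁻¹ ∈ Icc 0 1 := by
  have : (1 : ℝ) ≤ p := by exact_mod_cast Nat.one_le_iff_ne_zero.2 hp
  constructor
  · simpa using inv_le_one_of_one_le₀ this
  · simp

noncomputable def partialEulerProduct (M j : ℕ) : ℝ :=
  ∏ p ∈ Finset.range j with p.Prime ∧ M < p, (1 - (p : ℝ)⁻¹)

theorem partialEulerProduct_mem_Icc (M j : ℕ) : partialEulerProduct M j ∈ Icc 0 1 := by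
  have hfac : ∀ p ∈ {p ∈ Finset.range j | p.Prime ∧ M < p}, 1 - (p : ℝ)⁻¹ ∈ Icc 0 1 :=
    fun p hp => one_sub_inv_natCast_mem_Icc (Finset.mem_filter.1 hp).2.1.ne_zero
  exact ⟨Finset.prod_nonneg fun p hp => (hfac p hp).1,
    Finset.prod_le_one (fun p hp => (hfac p hp).1) fun p hp => (hfac p hp).2⟩

theorem tendsto_partialEulerProduct_atTop (M : ℕ) :
    Tendsto (partialEulerProduct M) atTop (𝓝 0) := by
  have hsum : Tendsto (fun j => ∑ p ∈ Finset.range j with p.Prime ∧ M < p, (p : ℝ)⁻¹)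
      atTop atTop := by
    convert (not_summable_iff_tendsto_nat_atTop_of_nonneg (fun n => ?_)).1
      (not_summable_one_div_on_primes_gt M) using 2 with j
    · simp [Finset.sum_filter, indicator_apply]
    · exact indicator_nonneg (fun n _ => by positivity) n
  refine squeeze_zero (fun j => (partialEulerProduct_mem_Icc M j).1) (fun j => ?_)
    (Real.tendsto_exp_atBot.comp (tendsto_neg_atTop_atBot.comp hsum))
  simp only [partialEulerProduct, Function.comp_apply, ← Finset.sum_neg_distrib, Real.exp_sum]
  refine Finset.prod_le_prod (fun p hp => ?_) fun p _ => ?_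
  · exact (one_sub_inv_natCast_mem_Icc (Finset.mem_filter.1 hp).2.1.ne_zero).1
  · linarith [Real.add_one_le_exp (-(p : ℝ)⁻¹)]

theorem partialEulerProduct_sub_succ_lt {M : ℕ} {ε : ℝ} (hε : 0 < ε) (hM : ε⁻¹ ≤ M) (j : ℕ) :
    partialEulerProduct M j - partialEulerProduct M (j + 1) < ε := by
  by_cases hj : j.Prime ∧ M < j
  · have hjε : (j : ℝ)⁻¹ < ε := by
      rw [inv_lt_comm₀ (by exact_mod_cast hj.1.pos) hε]
      exact hM.trans_lt (by exact_mod_cast hj.2)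
    have hsucc : partialEulerProduct M (j + 1) = (1 - (j : ℝ)⁻¹) * partialEulerProduct M j := by
      simp only [partialEulerProduct, Finset.range_add_one, Finset.filter_insert, hj]
      exact Finset.prod_insert (by simp)
    calc partialEulerProduct M j - partialEulerProduct M (j + 1)
        = (j : ℝ)⁻¹ * partialEulerProduct M j := by rw [hsucc]; ring
      _ ≤ (j : ℝ)⁻¹ := mul_le_of_le_one_right (by positivity) (partialEulerProduct_mem_Icc M j).2
      _ < ε := hjε
  · have hsucc : partialEulerProduct M (j + 1) = partialEulerProduct M j := by
      simp only [partialEulerProduct, Finset.range_add_one, Finset.filter_insert, hj, if_false]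
    linarith

theorem Ioc_subset_closure_totient_div_self {a : ℕ} (ha : a ≠ 0) :
    Ioc (0 : ℝ) 1 ⊆ closure {r | ∃ k : ℕ, 0 < k ∧ k.Coprime a ∧ r = k.totient / k} := by
  intro t ht
  rw [Metric.mem_closure_iff]
  intro ε hε
  set M := max a ⌈ε⁻¹⌉₊
  obtain ⟨j, hjt, hjε⟩ := exists_mem_Ico_of_tendsto_zero ht.1
    (by simpa [partialEulerProduct] using ht.2) (tendsto_partialEulerProduct_atTop M)
    (partialEulerProduct_sub_succ_lt hε
      ((Nat.le_ceil _).trans (by exact_mod_cast le_max_right _ _)))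
  set F := {p ∈ Finset.range j | p.Prime ∧ M < p}
  have hF : ∀ p ∈ F, p.Prime ∧ M < p := fun p hp => (Finset.mem_filter.1 hp).2
  refine ⟨partialEulerProduct M j, ⟨∏ p ∈ F, p, Finset.prod_pos fun p hp => (hF p hp).1.pos,
    Nat.Coprime.prod_left fun p hp => ?_, ?_⟩, ?_⟩
  · exact ((hF p hp).1.coprime_iff_not_dvd).2 fun hdvd => (Nat.le_of_dvd (Nat.pos_of_ne_zero ha)
      hdvd).not_gt ((le_max_left _ _).trans_lt (hF p hp).2)
  · have hpos : (0 : ℝ) < ∏ p ∈ F, (p : ℝ) := Finset.prod_pos fun p hp => by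
      exact_mod_cast (hF p hp).1.pos
    rw [Nat.cast_totient_eq_mul_prod_one_sub_inv, Nat.primeFactors_prod fun p hp => (hF p hp).1,
      Nat.cast_prod, mul_div_cancel_left₀ _ hpos.ne', partialEulerProduct]
  · rw [Real.dist_eq, abs_lt]
    constructor <;> linarith

theorem tendsto_affine_div_affine_atTop {α β γ δ : ℝ} (hγ : γ ≠ 0) :
    Tendsto (fun x => (α * x + β) / (γ * x + δ)) atTop (𝓝 (α / γ)) := by
  have h : Tendsto (fun x : ℝ => (α + β * x⁻¹) / (γ + δ * x⁻¹)) atTop (𝓝 (α / γ)) := by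
    have := ((tendsto_const_nhds (x := α)).add (tendsto_inv_atTop_zero.const_mul β)).div
      ((tendsto_const_nhds (x := γ)).add (tendsto_inv_atTop_zero.const_mul δ)) (by simpa using hγ)
    simp only [mul_zero, add_zero] at this
    exact this
  refine h.congr' ((eventually_gt_atTop 0).mono fun x hx => ?_)
  rw [← mul_div_mul_right _ _ hx.ne']
  congr 1 <;> field_simp

theorem frequently_prime_and_dvd_gcd_mul_sub {a k : ℕ} (ha : a ≠ 0) (b : ℤ) (hk : k.Coprime a) :
    ∃ᶠ q : ℕ in atTop, q.Prime ∧ (a : ℤ) ∣ Int.gcd a b * k * q - b := by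
  have hg : 0 < Int.gcd a b := Int.gcd_pos_of_ne_zero_left b (by exact_mod_cast ha)
  obtain ⟨a', b', hcop, ha', hb'⟩ := Int.exists_gcd_one hg
  set g := Int.gcd a b
  lift a' to ℕ using by nlinarith [(Int.natCast_nonneg a).trans_eq ha']
  have : NeZero a' := ⟨by rintro rfl; simp [ha] at ha'⟩
  have hka' : k.Coprime a' := hk.coprime_dvd_right ⟨g, by exact_mod_cast ha'⟩
  set u := ZMod.unitOfCoprime k hka'
  have hr : IsUnit ((b' : ZMod a') * (u⁻¹ : (ZMod a')ˣ)) :=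
    ((ZMod.coe_int_isUnit_iff_isCoprime _ _).2 (Int.isCoprime_iff_gcd_eq_one.2 hcop)).mul
      (Units.isUnit _)
  refine frequently_atTop.2 fun n => ?_
  obtain ⟨q, hqn, hq, hqr⟩ := Nat.forall_exists_prime_gt_and_eq_mod hr n
  refine ⟨q, hqn.le, hq, ?_⟩
  obtain ⟨m, hm⟩ : (a' : ℤ) ∣ k * q - b' := by
    rw [← ZMod.intCast_zmod_eq_zero_iff_dvd]
    have hu : (k : ZMod a') * (u⁻¹ : (ZMod a')ˣ) = 1 := by
      rw [← ZMod.coe_unitOfCoprime k hka', Units.mul_inv]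
    push_cast
    rw [hqr]
    linear_combination (b' : ZMod a') * hu
  exact ⟨m, by rw [ha', hb']; linear_combination (g : ℤ) * hm⟩

def totientQuotients (a : ℕ) (b : ℤ) (c d : ℝ) : Set ℝ :=
  {y | ∃ n : ℕ, 0 < n ∧ 0 < (a : ℤ) * n + b ∧ 0 < c * n + d ∧
    y = (Nat.totient ((a : ℤ) * n + b).toNat : ℝ) / (c * n + d)}

theorem totient_mul_prime_div_mem_totientQuotients {a K q : ℕ} {b : ℤ} {c d : ℝ} (ha : a ≠ 0)
    (hK : 0 < K) (hq : q.Prime) (hKq : K < q) (hbq : b.natAbs < q) (hdvd : (a : ℤ) ∣ K * q - b)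
    (hden : 0 < c * K / a * q + (d - c * b / a)) :
    (K.totient * q + -K.totient : ℝ) / (c * K / a * q + (d - c * b / a)) ∈
      totientQuotients a b c d := by
  obtain ⟨m, hm⟩ := hdvd
  have hm₀ : 0 < m := by
    have : (b.natAbs : ℤ) < K * q := by exact_mod_cast hbq.trans_le (Nat.le_mul_of_pos_left q hK)
    have : 0 < (a : ℤ) * m := by linarith [Int.le_natAbs (a := b)]
    exact pos_of_mul_pos_right this (by positivity)
  lift m to ℕ using hm₀.le
  have hn : (a : ℤ) * m + b = (K * q : ℕ) := by push_cast; linarith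
  have hden' : c * m + d = c * K / a * q + (d - c * b / a) := by
    have : (a : ℝ) * m = K * q - b := by exact_mod_cast hm.symm
    field_simp
    linear_combination c * this
  have hcop : K.Coprime q :=
    ((hq.coprime_iff_not_dvd).2 fun h => (Nat.le_of_dvd hK h).not_gt hKq).symm
  refine ⟨m, by exact_mod_cast hm₀, by rw [hn]; exact_mod_cast Nat.mul_pos hK hq.pos,
    hden' ▸ hden, ?_⟩
  rw [hn, Int.toNat_natCast, Nat.totient_mul hcop, Nat.totient_prime hq, hden']
  push_cast [hq.one_le]
  ring

theorem mul_totient_div_self_mem_closure_totientQuotients {a k : ℕ} (ha : a ≠ 0) (b : ℤ)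
    {c : ℝ} (hc : 0 < c) (d : ℝ) (hk₀ : 0 < k) (hk : k.Coprime a) :
    a * (Int.gcd a b).totient / (c * Int.gcd a b) * (k.totient / k : ℝ) ∈
      closure (totientQuotients a b c d) := by
  set g := Int.gcd a b
  set K := g * k
  have hK : 0 < K := Nat.mul_pos (Int.gcd_pos_of_ne_zero_left b (by exact_mod_cast ha)) hk₀
  have hga : g ∣ a := Int.natCast_dvd_natCast.1 (Int.gcd_dvd_left _ _)
  have hφK : K.totient = g.totient * k.totient := Nat.totient_mul (hk.coprime_dvd_right hga).symm
  have hσ : 0 < c * K / a := by positivity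
  have hval : a * g.totient / (c * g) * (k.totient / k : ℝ) = K.totient / (c * K / a) := by
    simp only [K, hφK, Nat.cast_mul]
    field_simp
  rw [hval]
  refine mem_closure_of_frequently_of_tendsto
    ((frequently_prime_and_dvd_gcd_mul_sub ha b hk).mp ?_)
    ((tendsto_affine_div_affine_atTop (β := -K.totient) (δ := d - c * b / a) hσ.ne').comp
      tendsto_natCast_atTop_atTop)
  have hden : ∀ᶠ q : ℕ in atTop, 0 < c * K / a * q + (d - c * b / a) :=
    ((tendsto_natCast_atTop_atTop.const_mul_atTop hσ).atTop_add
      tendsto_const_nhds).eventually_gt_atTop 0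
  filter_upwards [hden, eventually_gt_atTop K, eventually_gt_atTop b.natAbs]
    with q hden hKq hbq ⟨hq, hdvd⟩
  exact totient_mul_prime_div_mem_totientQuotients ha hK hq hKq hbq hdvd hden

theorem dense_totient_fraction (a : ℕ) (ha : 0 < a) (b : ℤ) (c d : ℝ) (hc : 0 < c) :
    Set.Ioc (0 : ℝ) ((a : ℝ) * (Nat.totient (Int.gcd a b)) / (c * (Int.gcd a b : ℕ))) ⊆
      closure {y : ℝ | ∃ n : ℕ, 0 < n ∧ 0 < (a : ℤ) * n + b ∧ 0 < c * n + d ∧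
        y = (Nat.totient ((a : ℤ) * n + b).toNat : ℝ) / (c * n + d) ∧
        y ≤ (a : ℝ) * (Nat.totient (Int.gcd a b)) / (c * (Int.gcd a b : ℕ))} := by
  set D : ℝ := a * (Int.gcd a b).totient / (c * Int.gcd a b)
  have hg : 0 < Int.gcd a b := Int.gcd_pos_of_ne_zero_left b (by exact_mod_cast ha.ne')
  have hD : 0 < D := by have := Nat.totient_pos.2 hg; positivity
  have hdense : Ioo 0 D ⊆ closure (totientQuotients a b c d) := by
    intro x hx
    have ht : x / D ∈ Ioc 0 1 := ⟨div_pos hx.1 hD, (div_le_one hD).2 hx.2.le⟩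
    have := map_mem_closure (continuous_const_mul D) (Ioc_subset_closure_totient_div_self ha.ne' ht)
      (t := closure (totientQuotients a b c d)) (by
        rintro _ ⟨k, hk₀, hk, rfl⟩
        exact mul_totient_div_self_mem_closure_totientQuotients ha.ne' b hc d hk₀ hk)
    rwa [closure_closure, mul_div_cancel₀ _ hD.ne'] at this
  calc Ioc 0 D ⊆ closure (Ioo 0 D) := by rw [closure_Ioo hD.ne]; exact Ioc_subset_Icc_self
    _ ⊆ closure (Iio D ∩ closure (totientQuotients a b c d)) :=
      closure_mono fun x hx => ⟨hx.2, hdense hx⟩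
    _ ⊆ closure (Iio D ∩ totientQuotients a b c d) :=
      closure_minimal isOpen_Iio.inter_closure isClosed_closure
    _ ⊆ _ := closure_mono <| by
      rintro _ ⟨hyD, n, hn, hpos, hden, rfl⟩
      exact ⟨n, hn, hpos, hden, rfl, hyD.le⟩
end

section
/- Let a ∈ ℕ, b ∈ ℤ, c ∈ ℝ with c > 0, and d ∈ ℝ. Then limsup_{n→∞} φ(an+b)/(cn+d) = a·φ(gcd(a,b))/(c·gcd(a,b)) and liminf_{n→∞} φ(an+b)/(cn+d) = 0, where n ranges over positive integers. -/
/-!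
Let `g = gcd(a, b)`. Since `g ∣ an + b` and `φ(N)/N = ∏_{p ∣ N} (1 - 1/p)`, we have
`φ(an + b) ≤ (φ(g)/g)(an + b)`, which bounds the limsup. By Dirichlet's theorem `(an + b)/g`
is a prime `p > g` for infinitely many `n`, and then `φ(an + b) = φ(g)(p - 1)`, so the bound is
attained in the limit. For the liminf: since `∑ 1/p` diverges, there are finite sets of primes
`p > a` with arbitrarily small `∏ (1 - 1/p)`. The product of such a set is coprime to `a`, so
it divides `an + b` for infinitely many `n`, and for those `φ(an + b)/(an + b) ≤ ∏ (1 - 1/p)`.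
-/

open Filter Topology Finset Nat

section LimsupLiminf

variable {ι : Type*} {l : Filter ι} {f u v : ι → ℝ} {L : ℝ}

theorem limsup_eq_of_eventually_le_of_frequently_eq (hf : IsBoundedUnder (· ≥ ·) l f)
    (hfu : f ≤ᶠ[l] u) (hu : Tendsto u l (𝓝 L)) (hfv : ∃ᶠ i in l, f i = v i)
    (hv : Tendsto v l (𝓝 L)) : limsup f l = L := by
  have : l.NeBot := (frequently_true_iff_neBot l).mp (hfv.mono fun _ _ => trivial)
  refine le_antisymm ?_ (le_of_forall_sub_le fun ε hε => ?_)
  · exact (limsup_le_limsup hfu hf.isCoboundedUnder_le hu.isBoundedUnder_le).trans hu.limsup_eq.le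
  · refine le_limsup_of_frequently_le ?_ (hu.isBoundedUnder_le.mono_le hfu)
    exact (hfv.and_eventually (hv.eventually (eventually_ge_nhds (by linarith)))).mono
      fun i ⟨hfvi, hvi⟩ => hfvi ▸ hvi

theorem liminf_eq_of_frequently_le_add (hf : IsBoundedUnder (· ≤ ·) l f)
    (hLf : ∀ᶠ i in l, L ≤ f i) (hfL : ∀ ε > 0, ∃ᶠ i in l, f i ≤ L + ε) : liminf f l = L := by
  have : l.NeBot := (frequently_true_iff_neBot l).mp ((hfL 1 one_pos).mono fun _ _ => trivial)
  refine le_antisymm (le_of_forall_pos_le_add fun ε hε => ?_)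
    (le_liminf_of_le hf.isCoboundedUnder_ge hLf)
  exact liminf_le_of_frequently_le (hfL ε hε) ⟨L, hLf⟩

end LimsupLiminf

theorem tendsto_affine_div_affine (α β c d : ℝ) (hc : c ≠ 0) :
    Tendsto (fun n : ℕ => (α * n + β) / (c * n + d)) atTop (𝓝 (α / c)) := by
  have hinv := tendsto_inv_atTop_nhds_zero_nat (𝕜 := ℝ)
  have hnum := (hinv.const_mul β).const_add α
  have hden := (hinv.const_mul d).const_add c
  rw [mul_zero, add_zero] at hnum hden
  refine (hnum.div hden hc).congr' ?_
  filter_upwards [eventually_ne_atTop 0] with n hn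
  have hn : (n : ℝ) ≠ 0 := Nat.cast_ne_zero.mpr hn
  simp only [Pi.div_apply]
  rw [← mul_div_mul_right _ _ hn]
  field_simp

theorem tendsto_natCast_mul_add_atTop {a : ℕ} (ha : 0 < a) (b : ℤ) :
    Tendsto (fun n : ℕ => (a : ℤ) * n + b) atTop atTop := by
  refine tendsto_atTop_add_const_right _ b ?_
  exact tendsto_natCast_atTop_atTop.const_mul_atTop' (Int.natCast_pos.mpr ha)

theorem eventually_mul_natCast_add_pos {c : ℝ} (hc : 0 < c) (d : ℝ) :
    ∀ᶠ n : ℕ in atTop, 0 < c * n + d :=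
  (tendsto_atTop_add_const_right _ d
    (tendsto_natCast_atTop_atTop.const_mul_atTop hc)).eventually_gt_atTop 0

theorem tendsto_toNat_mul_add_add_div {a : ℕ} (ha : 0 < a) (b : ℤ) {c : ℝ} (hc : c ≠ 0)
    (d e : ℝ) :
    Tendsto (fun n : ℕ => ((((a : ℤ) * n + b).toNat : ℝ) + e) / (c * n + d)) atTop
      (𝓝 (a / c)) := by
  refine (tendsto_affine_div_affine a (b + e) c d hc).congr' ?_
  filter_upwards [(tendsto_natCast_mul_add_atTop ha b).eventually_ge_atTop 0] with n hn
  have hcast : ((((a : ℤ) * n + b).toNat : ℤ) : ℝ) = ((a * n + b : ℤ) : ℝ) :=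
    congrArg _ (Int.toNat_of_nonneg hn)
  push_cast at hcast
  rw [hcast]
  ring

theorem Int.natCast_dvd_toNat {m : ℕ} {x : ℤ} (h : (m : ℤ) ∣ x) : m ∣ x.toNat := by
  rcases le_or_gt 0 x with hx | hx
  · exact Int.natCast_dvd_natCast.mp (by rwa [Int.toNat_of_nonneg hx])
  · rw [Int.toNat_of_nonpos hx.le]
    exact dvd_zero m

theorem Nat.Prime.one_sub_inv_nonneg {p : ℕ} (hp : p.Prime) : 0 ≤ 1 - (p : ℝ)⁻¹ :=
  sub_nonneg.mpr (inv_le_one_of_one_le₀ (by exact_mod_cast hp.one_lt.le))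

theorem Nat.totient_le_mul_prod_of_subset_primeFactors {N : ℕ} {S : Finset ℕ}
    (hS : S ⊆ N.primeFactors) : (φ N : ℝ) ≤ N * ∏ p ∈ S, (1 - (p : ℝ)⁻¹) := by
  have hφ := congrArg (Rat.cast : ℚ → ℝ) (totient_eq_mul_prod_factors N)
  push_cast at hφ
  rw [hφ, ← prod_sdiff hS]
  refine mul_le_mul_of_nonneg_left (mul_le_of_le_one_left ?_ ?_) N.cast_nonneg
  · exact prod_nonneg fun p hp => (prime_of_mem_primeFactors (hS hp)).one_sub_inv_nonneg
  · refine prod_le_one (fun p hp => ?_) fun p _ => sub_le_self _ (by positivity)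
    exact (prime_of_mem_primeFactors (mem_sdiff.mp hp).1).one_sub_inv_nonneg

theorem Nat.totient_mul_le_of_dvd {g N : ℕ} (h : g ∣ N) : φ N * g ≤ φ g * N := by
  rcases eq_or_ne N 0 with rfl | hN
  · simp
  have hφ := congrArg (Rat.cast : ℚ → ℝ) (totient_eq_mul_prod_factors g)
  push_cast at hφ
  have hle : (φ N * g : ℝ) ≤ φ g * N := calc
    (φ N * g : ℝ) ≤ (N * ∏ p ∈ g.primeFactors, (1 - (p : ℝ)⁻¹)) * g :=
      mul_le_mul_of_nonneg_right
        (totient_le_mul_prod_of_subset_primeFactors (primeFactors_mono h hN)) g.cast_nonneg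
    _ = φ g * N := by rw [hφ]; ring
  exact_mod_cast hle

theorem exists_finset_prime_gt_prod_one_sub_inv_lt (a : ℕ) {δ : ℝ} (hδ : 0 < δ) :
    ∃ S : Finset ℕ, (∀ p ∈ S, p.Prime ∧ a < p) ∧ ∏ p ∈ S, (1 - (p : ℝ)⁻¹) < δ := by
  set recip := Set.indicator {p : ℕ | p.Prime ∧ a < p} fun n : ℕ => (1 : ℝ) / n
  have hrecip : ¬ Summable recip := fun h => not_summable_one_div_on_primes <| h.congr_cofinite <| by
    rw [Nat.cofinite_eq_atTop]
    filter_upwards [eventually_gt_atTop a] with n hn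
    simp [recip, Set.indicator_apply, hn]
  have hsum := (not_summable_iff_tendsto_nat_atTop_of_nonneg
    fun n => Set.indicator_nonneg (fun n _ => by positivity) n).mp hrecip
  obtain ⟨N, hN⟩ := (hsum.eventually_gt_atTop (-Real.log δ)).exists
  set S := (range N).filter fun p => p.Prime ∧ a < p
  refine ⟨S, fun p hp => (mem_filter.mp hp).2, ?_⟩
  have hSg : ∑ p ∈ S, (p : ℝ)⁻¹ = ∑ n ∈ range N, recip n := by
    rw [sum_filter]
    exact sum_congr rfl fun n _ => by simp [recip, Set.indicator_apply]
  calc ∏ p ∈ S, (1 - (p : ℝ)⁻¹)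
      ≤ ∏ p ∈ S, Real.exp (-(p : ℝ)⁻¹) :=
        prod_le_prod (fun p hp => (mem_filter.mp hp).2.1.one_sub_inv_nonneg)
          fun p _ => by linarith [Real.add_one_le_exp (-(p : ℝ)⁻¹)]
    _ = Real.exp (-∑ n ∈ range N, recip n) := by rw [← Real.exp_sum, sum_neg_distrib, hSg]
    _ < δ := by rw [← Real.exp_log hδ]; exact Real.exp_lt_exp.mpr (by linarith)

theorem frequently_dvd_natCast_mul_add {a P : ℕ} (hP : P ≠ 0) (h : a.Coprime P) (b : ℤ) :
    ∃ᶠ n : ℕ in atTop, (P : ℤ) ∣ a * n + b := by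
  have : NeZero P := ⟨hP⟩
  set u := ZMod.unitOfCoprime a h
  have hu : (a : ZMod P) * ↑u⁻¹ = 1 := by rw [← ZMod.coe_unitOfCoprime a h, Units.mul_inv]
  set n₀ : ℕ := ((-b : ZMod P) * ↑u⁻¹).val
  have h₀ : (P : ℤ) ∣ a * n₀ + b := by
    rw [← ZMod.intCast_zmod_eq_zero_iff_dvd]
    push_cast
    rw [ZMod.natCast_zmod_val]
    linear_combination (-b : ZMod P) * hu
  refine frequently_atTop.mpr fun M => ⟨n₀ + M * P, ?_, ?_⟩
  · nlinarith [Nat.one_le_iff_ne_zero.mpr hP]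
  · have : (a : ℤ) * ↑(n₀ + M * P) + b = a * n₀ + b + a * M * P := by push_cast; ring
    rw [this]
    exact dvd_add h₀ (dvd_mul_left _ _)

theorem frequently_natCast_mul_add_eq_prime {a : ℕ} {b : ℤ} (ha : a ≠ 0) (h : IsCoprime b a) :
    ∃ᶠ n : ℕ in atTop, ∃ p : ℕ, p.Prime ∧ (a : ℤ) * n + b = p := by
  refine frequently_atTop.mpr fun M => ?_
  obtain ⟨p, hpM, hp, hpb⟩ := Nat.forall_exists_prime_gt_and_zmodEq (a * M + b.natAbs) ha h
  obtain ⟨k, hk⟩ := hpb.symm.dvd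
  have hpM : ((a * M + b.natAbs : ℕ) : ℤ) < p := by exact_mod_cast hpM
  push_cast at hpM
  have hMk : (M : ℤ) < k := by
    have : (a : ℤ) * M < a * k := by linarith [le_abs_self b]
    exact lt_of_mul_lt_mul_left this (by positivity)
  refine ⟨k.toNat, by omega, p, hp, ?_⟩
  rw [Int.toNat_of_nonneg (by omega)]
  linarith

theorem frequently_totient_toNat_le_mul {a : ℕ} (ha : 0 < a) (b : ℤ) {δ : ℝ} (hδ : 0 < δ) :
    ∃ᶠ n : ℕ in atTop, (φ ((a : ℤ) * n + b).toNat : ℝ) ≤ δ * ((a : ℤ) * n + b).toNat := by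
  obtain ⟨S, hS, hSδ⟩ := exists_finset_prime_gt_prod_one_sub_inv_lt a hδ
  have hP : ∏ p ∈ S, p ≠ 0 := prod_ne_zero_iff.mpr fun p hp => (hS p hp).1.ne_zero
  have hcop : a.Coprime (∏ p ∈ S, p) := Nat.Coprime.prod_right fun p hp =>
    ((hS p hp).1.coprime_iff_not_dvd.mpr (Nat.not_dvd_of_pos_of_lt ha (hS p hp).2)).symm
  refine ((frequently_dvd_natCast_mul_add hP hcop b).and_eventually
    ((tendsto_natCast_mul_add_atTop ha b).eventually_gt_atTop 0)).mono fun n ⟨hdvd, hpos⟩ => ?_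
  set N := ((a : ℤ) * n + b).toNat
  have hN : (N : ℤ) = a * n + b := Int.toNat_of_nonneg hpos.le
  have hSN : S ⊆ N.primeFactors := fun p hp => Nat.mem_primeFactors.mpr ⟨(hS p hp).1,
    (dvd_prod_of_mem _ hp).trans (Int.natCast_dvd_natCast.mp (hN ▸ hdvd)), by omega⟩
  calc (φ N : ℝ) ≤ N * ∏ p ∈ S, (1 - (p : ℝ)⁻¹) := totient_le_mul_prod_of_subset_primeFactors hSN
    _ ≤ δ * N := by rw [mul_comm]; exact mul_le_mul_of_nonneg_right hSδ.le N.cast_nonneg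

theorem frequently_natCast_mul_add_eq_gcd_mul_prime {a : ℕ} (ha : 0 < a) (b : ℤ) :
    ∃ᶠ n : ℕ in atTop, ∃ p : ℕ, p.Prime ∧ Int.gcd a b < p ∧ (a : ℤ) * n + b = Int.gcd a b * p := by
  set g := Int.gcd a b
  have hg : 0 < g := Int.gcd_pos_of_ne_zero_left b (by exact_mod_cast ha.ne')
  obtain ⟨a', hga⟩ : g ∣ a := Int.natCast_dvd_natCast.mp (Int.gcd_dvd_left _ _)
  obtain ⟨b', hgb⟩ : (g : ℤ) ∣ b := Int.gcd_dvd_right _ _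
  have hcop : IsCoprime b' a' := by
    have h := Int.gcd_mul_left g a' b'
    rw [← Nat.cast_mul, ← hga, ← hgb, Int.natAbs_natCast] at h
    rw [Int.isCoprime_iff_gcd_eq_one, Int.gcd_comm]
    exact (Nat.mul_eq_left hg.ne').mp h.symm
  rw [hga] at ha ⊢
  have ha' : 0 < a' := Nat.pos_of_mul_pos_left ha
  refine ((frequently_natCast_mul_add_eq_prime ha'.ne' hcop).and_eventually
    ((tendsto_natCast_mul_add_atTop ha' b').eventually_gt_atTop g)).mono
    fun n ⟨⟨p, hp, hpn⟩, hgn⟩ => ⟨p, hp, by omega, ?_⟩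
  rw [hgb, ← hpn]
  push_cast
  ring

theorem limsup_totient_toNat_mul_add_div {a : ℕ} (ha : 0 < a) (b : ℤ) {c : ℝ} (hc : 0 < c)
    (d : ℝ) :
    limsup (fun n : ℕ => (φ ((a : ℤ) * n + b).toNat : ℝ) / (c * n + d)) atTop =
      a * φ (Int.gcd a b) / (c * Int.gcd a b) := by
  set g := Int.gcd a b
  set N : ℕ → ℕ := fun n => ((a : ℤ) * n + b).toNat
  have hg : 0 < g := Int.gcd_pos_of_ne_zero_left b (by exact_mod_cast ha.ne')
  have hden := eventually_mul_natCast_add_pos hc d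
  have hlim : ∀ e : ℝ, Tendsto (fun n => φ g / g * ((N n + e) / (c * n + d))) atTop
      (𝓝 (a * φ g / (c * g))) := fun e => by
    convert (tendsto_toNat_mul_add_add_div ha b hc.ne' d e).const_mul ((φ g : ℝ) / g) using 2
    field_simp
  refine limsup_eq_of_eventually_le_of_frequently_eq ?_ ?_ (hlim 0) ?_ (hlim (-g))
  · exact isBoundedUnder_of_eventually_ge (hden.mono fun n h => div_nonneg (Nat.cast_nonneg _) h.le)
  · filter_upwards [hden] with n hn
    have hgN : g ∣ N n := Int.natCast_dvd_toNat <|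
      dvd_add (dvd_mul_of_dvd_left (Int.gcd_dvd_left _ _) _) (Int.gcd_dvd_right _ _)
    have := Nat.totient_mul_le_of_dvd hgN
    rw [add_zero, ← mul_div_assoc, div_le_div_iff_of_pos_right hn, div_mul_eq_mul_div,
      le_div_iff₀ (by exact_mod_cast hg)]
    exact_mod_cast this
  · refine (frequently_natCast_mul_add_eq_gcd_mul_prime ha b).mono fun n ⟨p, hp, hgp, hn⟩ => ?_
    have hNn : N n = g * p := by simp only [N, hn]; exact_mod_cast Int.toNat_natCast (g * p)
    have hφ : φ (N n) = φ g * (p - 1) := by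
      rw [hNn, mul_comm, totient_mul_of_prime_of_not_dvd hp (Nat.not_dvd_of_pos_of_lt hg hgp),
        mul_comm]
    have hg0 : (g : ℝ) ≠ 0 := by exact_mod_cast hg.ne'
    change (φ (N n) : ℝ) / (c * n + d) = φ g / g * ((((N n : ℕ) : ℝ) + -g) / (c * n + d))
    rw [hφ, hNn]
    push_cast [hp.one_le]
    field_simp
    ring

theorem liminf_totient_toNat_mul_add_div {a : ℕ} (ha : 0 < a) (b : ℤ) {c : ℝ} (hc : 0 < c)
    (d : ℝ) :
    liminf (fun n : ℕ => (φ ((a : ℤ) * n + b).toNat : ℝ) / (c * n + d)) atTop = 0 := by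
  set N : ℕ → ℕ := fun n => ((a : ℤ) * n + b).toNat
  have hden := eventually_mul_natCast_add_pos hc d
  have hlim : Tendsto (fun n => (N n : ℝ) / (c * n + d)) atTop (𝓝 (a / c)) := by
    simpa using tendsto_toNat_mul_add_add_div ha b hc.ne' d 0
  refine liminf_eq_of_frequently_le_add ?_ ?_ fun ε hε => ?_
  · refine hlim.isBoundedUnder_le.mono_le (hden.mono fun n hn => ?_)
    exact div_le_div_of_nonneg_right (by exact_mod_cast totient_le _) hn.le
  · exact hden.mono fun n h => div_nonneg (Nat.cast_nonneg _) h.le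
  · set δ := ε / (a / c + 1)
    have hδ : 0 < δ := by positivity
    have hδε : δ * (a / c) < ε := by
      rw [div_mul_eq_mul_div, div_lt_iff₀ (by positivity)]
      nlinarith
    refine ((frequently_totient_toNat_le_mul ha b hδ).and_eventually
      (hden.and ((hlim.const_mul δ).eventually_lt_const hδε))).mono
      fun n ⟨hφ, hn, hδn⟩ => ?_
    rw [zero_add]
    calc (φ (N n) : ℝ) / (c * n + d) ≤ δ * N n / (c * n + d) :=
          div_le_div_of_nonneg_right hφ hn.le
      _ ≤ ε := by rw [mul_div_assoc]; exact hδn.le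

theorem limsup_liminf_totient_fraction (a : ℕ) (ha : 0 < a) (b : ℤ) (c d : ℝ) (hc : 0 < c) :
    limsup (fun n : ℕ => (Nat.totient ((a : ℤ) * n + b).toNat : ℝ) / (c * n + d)) atTop =
      (a : ℝ) * (Nat.totient (Int.gcd a b)) / (c * (Int.gcd a b : ℕ)) ∧
    liminf (fun n : ℕ => (Nat.totient ((a : ℤ) * n + b).toNat : ℝ) / (c * n + d)) atTop = 0 :=
  ⟨limsup_totient_toNat_mul_add_div ha b hc d, liminf_totient_toNat_mul_add_div ha b hc d⟩
end

section
/- For all integers m ≥ 1 and b, d, r ∈ ℤ with b ≠ d, the set of values φ(n+b)/φ(n+d), where n ranges over positive integers with n > max{-b, -d} and n ≡ r (mod m), is dense in the interval (0, ∞). -/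
/-!
Write `φ N / N = ∏_{p ∣ N} (1 - 1/p)`. By the Chinese remainder theorem there is
`n ≡ r (mod m)`, `Y ≤ n < m * 8 ^ Y`, such that the primes `p ≤ Y` dividing `n + b`
(resp. `n + d`) are exactly the primes of `m` dividing `r + b` (resp. `r + d`) together with a
prescribed finite set `S` (resp. `T`). A number `N ≤ K ^ Y` has at most `Y log K / log Y` prime
factors above `Y`, so these change `φ N / N` by a factor tending to `1`. Hence, as `Y → ∞`,
`φ(n + b) / φ(n + d)` tends to `c * ∏_{p ∈ S} (1 - 1/p) / ∏_{p ∈ T} (1 - 1/p)` with `c > 0`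
depending only on `m, b, d, r`. Because `∑ 1/p` diverges, such quotients over disjoint sets of
primes avoiding any given finite set are dense in `(0, ∞)`. Replacing `m` by `2 * m` makes every
prime `p ≤ Y` with `p ∤ m` odd, so that some residue class mod `p` avoids both `-b` and `-d`.
-/

open Finset Filter Topology
open scoped Nat

noncomputable def coprimeDensity (s : Finset ℕ) : ℝ := ∏ p ∈ s, (1 - (p : ℝ)⁻¹)

lemma one_sub_natCast_inv_nonneg (p : ℕ) : 0 ≤ 1 - (p : ℝ)⁻¹ :=
  sub_nonneg.2 (Nat.cast_inv_le_one p)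

lemma coprimeDensity_nonneg (s : Finset ℕ) : 0 ≤ coprimeDensity s :=
  prod_nonneg fun p _ => one_sub_natCast_inv_nonneg p

lemma coprimeDensity_le_one (s : Finset ℕ) : coprimeDensity s ≤ 1 :=
  prod_le_one (fun p _ => one_sub_natCast_inv_nonneg p)
    fun p _ => sub_le_self _ (inv_nonneg.2 p.cast_nonneg)

lemma coprimeDensity_pos {s : Finset ℕ} (hs : 1 ∉ s) : 0 < coprimeDensity s := by
  refine prod_pos fun p hp => sub_pos.2 ?_
  rcases Nat.lt_or_gt_of_ne (ne_of_mem_of_not_mem hp hs) with h | h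
  · simp [Nat.lt_one_iff.1 h]
  · exact inv_lt_one_of_one_lt₀ (by exact_mod_cast h)

lemma coprimeDensity_union {s t : Finset ℕ} (h : Disjoint s t) :
    coprimeDensity (s ∪ t) = coprimeDensity s * coprimeDensity t :=
  prod_union h

lemma totient_eq_mul_coprimeDensity (N : ℕ) :
    (φ N : ℝ) = N * coprimeDensity N.primeFactors := by
  simpa [coprimeDensity] using congrArg (fun q : ℚ => (q : ℝ)) (Nat.totient_eq_mul_prod_factors N)

lemma one_sub_sum_le_prod_one_sub {ι : Type*} (s : Finset ι) {f : ι → ℝ}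
    (h0 : ∀ i ∈ s, 0 ≤ f i) (h1 : ∀ i ∈ s, f i ≤ 1) :
    1 - ∑ i ∈ s, f i ≤ ∏ i ∈ s, (1 - f i) := by
  classical
  induction s using Finset.induction_on with
  | empty => simp
  | insert a s ha ih =>
    rw [sum_insert ha, prod_insert ha]
    have ih := ih (fun i hi => h0 i (mem_insert_of_mem hi)) fun i hi => h1 i (mem_insert_of_mem hi)
    have hs : 0 ≤ ∑ i ∈ s, f i := sum_nonneg fun i hi => h0 i (mem_insert_of_mem hi)
    nlinarith [h0 a (mem_insert_self a s), h1 a (mem_insert_self a s)]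

lemma one_sub_log_div_log_le_coprimeDensity {N K Y : ℕ} (hN : N ≠ 0) (hNK : N ≤ K ^ Y)
    (hY : 1 < Y) {U : Finset ℕ} (hU : U ⊆ N.primeFactors) (hUY : ∀ p ∈ U, Y ≤ p) :
    1 - Real.log K / Real.log Y ≤ coprimeDensity U := by
  have hlogY : 0 < Real.log Y := Real.log_pos (by exact_mod_cast hY)
  have hYpos : (0 : ℝ) < Y := by positivity
  have hpow : Y ^ U.card ≤ K ^ Y :=
    calc Y ^ U.card ≤ ∏ p ∈ U, p := pow_card_le_prod U id Y hUY
      _ ≤ N := Nat.le_of_dvd (Nat.pos_of_ne_zero hN)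
        ((prod_dvd_prod_of_subset U _ id hU).trans (Nat.prod_primeFactors_dvd N))
      _ ≤ K ^ Y := hNK
  have hcard : U.card * Real.log Y ≤ Y * Real.log K := by
    rw [← Real.log_pow, ← Real.log_pow]
    exact Real.log_le_log (by positivity) (by exact_mod_cast hpow)
  have hsum : ∑ p ∈ U, (p : ℝ)⁻¹ ≤ Real.log K / Real.log Y :=
    calc ∑ p ∈ U, (p : ℝ)⁻¹ ≤ U.card • (Y : ℝ)⁻¹ :=
          sum_le_card_nsmul _ _ _ fun p hp => inv_anti₀ hYpos (by exact_mod_cast hUY p hp)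
      _ ≤ Real.log K / Real.log Y := by
          rw [nsmul_eq_mul, le_div_iff₀ hlogY]
          calc U.card * (Y : ℝ)⁻¹ * Real.log Y = U.card * Real.log Y / Y := by ring
            _ ≤ Real.log K := by rwa [div_le_iff₀ hYpos, mul_comm (Real.log K)]
  calc 1 - Real.log K / Real.log Y ≤ 1 - ∑ p ∈ U, (p : ℝ)⁻¹ := by linarith
    _ ≤ coprimeDensity U := one_sub_sum_le_prod_one_sub U (fun p _ => inv_nonneg.2 p.cast_nonneg)
        fun p _ => Nat.cast_inv_le_one p

lemma tendsto_totient_div_self {N : ℕ → ℕ} {A : Finset ℕ} (K : ℕ)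
    (hN : ∀ᶠ Y in atTop, N Y ≠ 0 ∧ N Y ≤ K ^ Y ∧ {p ∈ (N Y).primeFactors | p ≤ Y} = A) :
    Tendsto (fun Y => (φ (N Y) : ℝ) / N Y) atTop (𝓝 (coprimeDensity A)) := by
  set U := fun Y => {p ∈ (N Y).primeFactors | ¬p ≤ Y}
  have hsplit : ∀ᶠ Y in atTop,
      coprimeDensity A * coprimeDensity (U Y) = (φ (N Y) : ℝ) / N Y := by
    filter_upwards [hN] with Y ⟨hN0, _, hA⟩
    rw [totient_eq_mul_coprimeDensity, mul_div_cancel_left₀ _ (by exact_mod_cast hN0), ← hA]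
    exact prod_filter_mul_prod_filter_not _ _ _
  have hlower : Tendsto (fun Y : ℕ => 1 - Real.log K / Real.log Y) atTop (𝓝 1) := by
    simpa using tendsto_const_nhds.sub <| tendsto_const_nhds.div_atTop <|
      Real.tendsto_log_atTop.comp tendsto_natCast_atTop_atTop
  have hU : Tendsto (fun Y => coprimeDensity (U Y)) atTop (𝓝 1) := by
    refine tendsto_of_tendsto_of_tendsto_of_le_of_le' hlower tendsto_const_nhds ?_
      (Eventually.of_forall fun Y => coprimeDensity_le_one _)
    filter_upwards [hN, eventually_gt_atTop 1] with Y ⟨hN0, hNK, _⟩ hY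
    exact one_sub_log_div_log_le_coprimeDensity hN0 hNK hY (filter_subset _ _)
      fun p hp => (not_le.1 (mem_filter.1 hp).2).le
  simpa using (tendsto_const_nhds.mul hU).congr' hsplit

lemma exists_mem_Ico_of_lt_add {a : ℕ → ℝ} {u ε : ℝ} (h0 : u ≤ a 0)
    (hstep : ∀ k, a k < a (k + 1) + ε) (hlt : ∃ k, a k < u) : ∃ k, u ≤ a k ∧ a k < u + ε := by
  classical
  obtain ⟨k, hk⟩ : ∃ k, Nat.find hlt = k + 1 :=
    Nat.exists_eq_succ_of_ne_zero fun h => (h ▸ Nat.find_spec hlt).not_ge h0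
  refine ⟨k, not_lt.1 (Nat.find_min hlt (by omega)), ?_⟩
  linarith [hstep k, hk ▸ Nat.find_spec hlt]

lemma tendsto_coprimeDensity_primes_atTop (G : Finset ℕ) :
    Tendsto (fun k => coprimeDensity {p ∈ range k | p.Prime ∧ p ∉ G}) atTop (𝓝 0) := by
  set f : ℕ → ℝ := fun p => if p.Prime ∧ p ∉ G then (p : ℝ)⁻¹ else 0
  have hf : ¬Summable f := fun hf => not_summable_one_div_on_primes <|
    hf.of_norm_bounded_eventually <| by
      filter_upwards [G.finite_toSet.compl_mem_cofinite] with p hp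
      by_cases hpr : p.Prime <;> simp_all [f]
  have hsum : Tendsto (fun k => ∑ p ∈ range k with p.Prime ∧ p ∉ G, (p : ℝ)⁻¹) atTop atTop := by
    simpa [f, sum_filter] using (not_summable_iff_tendsto_nat_atTop_of_nonneg
      fun p => by positivity).1 hf
  refine squeeze_zero (fun k => coprimeDensity_nonneg _) (fun k => ?_)
    (Real.tendsto_exp_atBot.comp (tendsto_neg_atTop_atBot.comp hsum))
  rw [Function.comp_apply, Function.comp_apply, ← sum_neg_distrib, Real.exp_sum]
  exact prod_le_prod (fun p _ => one_sub_natCast_inv_nonneg p)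
    fun p _ => Real.one_sub_le_exp_neg _

lemma exists_coprimeDensity_mem_Ico (F : Finset ℕ) {u ε : ℝ} (hu : 0 < u) (hu1 : u ≤ 1)
    (hε : 0 < ε) : ∃ S : Finset ℕ, (∀ p ∈ S, p.Prime ∧ p ∉ F) ∧
      u ≤ coprimeDensity S ∧ coprimeDensity S < u + ε := by
  obtain ⟨N₀, hN₀⟩ := exists_nat_gt ε⁻¹
  set G := F ∪ range N₀
  -- adding the primes outside `G` one at a time lowers the product by steps `< 1 / N₀ < ε`
  set a := fun k => coprimeDensity {p ∈ range k | p.Prime ∧ p ∉ G}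
  have hstep : ∀ k, a k < a (k + 1) + ε := fun k => by
    have h0 := coprimeDensity_nonneg {p ∈ range k | p.Prime ∧ p ∉ G}
    have h1 := coprimeDensity_le_one {p ∈ range k | p.Prime ∧ p ∉ G}
    simp only [a, coprimeDensity, range_add_one, filter_insert] at h0 h1 ⊢
    split_ifs with hk
    · rw [prod_insert (by simp)]
      have hkN : (k : ℝ)⁻¹ < ε := by
        have hNk : (N₀ : ℝ) ≤ k := by exact_mod_cast (by simpa [G] using hk.2 : k ∉ F ∧ N₀ ≤ k).2
        have hk0 : ε⁻¹ < k := hN₀.trans_le hNk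
        exact (inv_lt_comm₀ ((inv_pos.2 hε).trans hk0) hε).2 hk0
      nlinarith [inv_nonneg.2 (Nat.cast_nonneg (α := ℝ) k)]
    · linarith
  obtain ⟨k, hk⟩ := exists_mem_Ico_of_lt_add (a := a) (by simpa [a, coprimeDensity] using hu1)
    hstep ((tendsto_coprimeDensity_primes_atTop G).eventually_lt_const hu).exists
  exact ⟨_, fun p hp => by simp_all [G], hk⟩

lemma Ioi_subset_closure_coprimeDensity_div (F : Finset ℕ) :
    Set.Ioi 0 ⊆ closure {x | ∃ S T : Finset ℕ, Disjoint S T ∧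
      (∀ p ∈ S ∪ T, p.Prime ∧ p ∉ F) ∧ coprimeDensity S / coprimeDensity T = x} := by
  intro τ hτ
  rw [Set.mem_Ioi] at hτ
  rw [Metric.mem_closure_iff]
  intro ε hε
  -- first `T` with `0 < coprimeDensity T ≤ τ⁻¹`, then `S` avoiding `T` with
  -- `coprimeDensity S ≈ τ * coprimeDensity T`
  set u := min 1 τ⁻¹ / 2 with hu_def
  have hu : 0 < u := by positivity
  obtain ⟨T, hTF, huT, hTu⟩ := exists_coprimeDensity_mem_Ico F hu (by
    linarith [min_le_left 1 τ⁻¹, hu_def]) hu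
  have hT0 : 0 < coprimeDensity T := hu.trans_le huT
  have hτT : τ * coprimeDensity T ≤ 1 := by
    rw [← le_div_iff₀' hτ, one_div]
    linarith [min_le_right 1 τ⁻¹, hu_def]
  obtain ⟨S, hSF, hSlo, hShi⟩ := exists_coprimeDensity_mem_Ico (F ∪ T) (by positivity) hτT
    (mul_pos hε hT0)
  refine ⟨_, ⟨S, T, disjoint_left.2 fun p hpS hpT => (hSF p hpS).2 (mem_union_right F hpT),
    fun p hp => ?_, rfl⟩, ?_⟩
  · rcases mem_union.1 hp with hp | hp
    · exact ⟨(hSF p hp).1, fun h => (hSF p hp).2 (mem_union_left T h)⟩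
    · exact hTF p hp
  · have hlo : τ ≤ coprimeDensity S / coprimeDensity T := (le_div_iff₀ hT0).2 hSlo
    have hhi : coprimeDensity S / coprimeDensity T < τ + ε := (div_lt_iff₀ hT0).2 (by linarith)
    rw [Real.dist_eq, abs_sub_lt_iff]
    constructor <;> linarith

lemma exists_not_dvd_add_and_not_dvd_add {p : ℕ} (hp : 3 ≤ p) (b d : ℤ) :
    ∃ c : ℤ, ¬(p : ℤ) ∣ c + b ∧ ¬(p : ℤ) ∣ c + d := by
  have hsmall : ∀ k : ℤ, 0 < k → k < 3 → ¬(p : ℤ) ∣ k := fun k hk hk3 h => by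
    have := Int.le_of_dvd hk h
    omega
  -- one of `c + b = 1` and `c + b = 2` works: `c + d` runs over two consecutive integers
  by_cases h : (p : ℤ) ∣ d - b + 1
  · refine ⟨-b + 2, by simpa using hsmall 2, fun h' => hsmall 1 one_pos (by norm_num) ?_⟩
    exact (dvd_add_right h).1 (by rwa [show d - b + 1 + 1 = -b + 2 + d by ring])
  · exact ⟨-b + 1, by simpa using hsmall 1, by ring_nf at h ⊢; exact h⟩

lemma exists_residue_dvd_iff {p : ℕ} (hp : 3 ≤ p) {b d : ℤ} {s t : Prop} (hst : ¬(s ∧ t))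
    (hbd : s ∨ t → ¬(p : ℤ) ∣ b - d) :
    ∃ c : ℤ, ((p : ℤ) ∣ c + b ↔ s) ∧ ((p : ℤ) ∣ c + d ↔ t) := by
  by_cases hs : s
  · have ht : ¬t := fun ht => hst ⟨hs, ht⟩
    refine ⟨-b, by simp [hs], ?_⟩
    simp only [ht, iff_false, neg_add_eq_sub]
    exact fun h => hbd (Or.inl hs) (dvd_sub_comm.1 h)
  by_cases ht : t
  · refine ⟨-d, ?_, by simp [ht]⟩
    simp only [hs, iff_false, neg_add_eq_sub]
    exact hbd (Or.inr ht)
  obtain ⟨c, hc⟩ := exists_not_dvd_add_and_not_dvd_add hp b d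
  exact ⟨c, by simpa [hs] using hc.1, by simpa [ht] using hc.2⟩

lemma exists_modEq_of_pairwise_coprime {t : Finset ℕ} (ht0 : 0 ∉ t)
    (ht : (t : Set ℕ).Pairwise Nat.Coprime) (a : ℕ → ℤ) (W : ℕ) :
    ∃ n : ℕ, W ≤ n ∧ n < (W + 1) * ∏ i ∈ t, i ∧ ∀ i ∈ t, (n : ℤ) ≡ a i [ZMOD i] := by
  have hs : ∀ i ∈ t, id i ≠ 0 := fun i hi h => ht0 (h ▸ hi)
  let k := Nat.chineseRemainderOfFinset (fun i => (a i % i).toNat) id t hs ht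
  have hk : (k : ℕ) < ∏ i ∈ t, i := Nat.chineseRemainderOfFinset_lt_prod _ _ hs ht
  have hprod : 0 < ∏ i ∈ t, i := prod_pos fun i hi => Nat.pos_of_ne_zero (hs i hi)
  refine ⟨k + W * ∏ i ∈ t, i, le_add_left (Nat.le_mul_of_pos_right W hprod), by nlinarith,
    fun i hi => ?_⟩
  have hki : (k : ℤ) ≡ a i [ZMOD i] := by
    have := Int.natCast_modEq_iff.2 (k.2 i hi)
    rw [id, Int.toNat_of_nonneg (Int.emod_nonneg _ (by exact_mod_cast hs i hi))] at this
    exact this.trans (Int.mod_modEq _ _)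
  refine Int.ModEq.trans ?_ hki
  rw [Int.modEq_iff_dvd]
  push_cast
  simpa using (Int.natCast_dvd_natCast.2 (dvd_prod_of_mem id hi)).mul_left (W : ℤ) |>.neg_right

lemma exists_shift_dvd_iff {m : ℕ} (hm : m ≠ 0) (hm2 : 2 ∣ m) (b d r : ℤ) {S T : Finset ℕ}
    (hST : Disjoint S T) (hSTm : ∀ p ∈ S ∪ T, p.Prime ∧ ¬p ∣ m ∧ ¬(p : ℤ) ∣ b - d) (Y : ℕ) :
    ∃ n : ℕ, Y ≤ n ∧ n < m * 8 ^ Y ∧ (n : ℤ) ≡ r [ZMOD m] ∧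
      ∀ p, p.Prime → p ≤ Y → ¬p ∣ m → ((p : ℤ) ∣ n + b ↔ p ∈ S) ∧ ((p : ℤ) ∣ n + d ↔ p ∈ T) := by
  choose! c hc using fun p (hp : 3 ≤ p) => exists_residue_dvd_iff hp (s := p ∈ S) (t := p ∈ T)
    (fun h => disjoint_left.1 hST h.1 h.2) fun h => (hSTm p (mem_union.2 h)).2.2
  set P := {p ∈ range (Y + 1) | p.Prime ∧ ¬p ∣ m}
  have hmP : m ∉ P := fun h => (mem_filter.1 h).2.2 dvd_rfl
  have hpair : ((insert m P : Finset ℕ) : Set ℕ).Pairwise Nat.Coprime := by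
    rw [coe_insert, Set.pairwise_insert]
    refine ⟨fun p hp q hq hpq => (Nat.coprime_primes (mem_filter.1 hp).2.1
      (mem_filter.1 hq).2.1).2 hpq, fun p hp _ => ?_⟩
    have hpm := ((mem_filter.1 hp).2.1.coprime_iff_not_dvd).2 (mem_filter.1 hp).2.2
    exact ⟨hpm.symm, hpm⟩
  have h0 : 0 ∉ insert m P := by simp [hm.symm, P, Nat.not_prime_zero]
  obtain ⟨n, hYn, hn, hmod⟩ :=
    exists_modEq_of_pairwise_coprime h0 hpair (fun i => if i = m then r else c i) Y
  refine ⟨n, hYn, ?_, by simpa using hmod m (mem_insert_self m P), fun p hp hpY hpm => ?_⟩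
  · have hPle : ∏ p ∈ P, p ≤ primorial Y :=
      prod_le_prod_of_subset_of_one_le' (fun p hp => mem_filter.2 ⟨(mem_filter.1 hp).1,
        (mem_filter.1 hp).2.1⟩) fun p hp _ => (mem_filter.1 hp).2.pos
    calc n < (Y + 1) * (m * ∏ p ∈ P, p) := by rwa [prod_insert hmP] at hn
      _ ≤ 2 ^ Y * (m * 4 ^ Y) := by
          gcongr
          · exact Nat.lt_two_pow_self
          · exact hPle.trans (primorial_le_four_pow Y)
      _ = m * 8 ^ Y := by rw [show 8 = 2 * 4 by rfl, mul_pow]; ring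
  · have hp3 : 3 ≤ p := by
      have := hp.two_le
      have : p ≠ 2 := fun h => hpm (h ▸ hm2)
      omega
    have hnp := hmod p (mem_insert_of_mem (mem_filter.2 ⟨mem_range.2 (by omega), hp, hpm⟩))
    rw [if_neg fun h : p = m => hpm (h ▸ dvd_rfl)] at hnp
    exact ⟨(hnp.add_right b).dvd_iff.trans (hc p hp3).1,
      (hnp.add_right d).dvd_iff.trans (hc p hp3).2⟩

def totientRatios (m : ℕ) (b d r : ℤ) : Set ℝ :=
  {y : ℝ | ∃ n : ℕ, 0 < n ∧ 0 < (n : ℤ) + b ∧ 0 < (n : ℤ) + d ∧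
    (n : ℤ) ≡ r [ZMOD (m : ℤ)] ∧
    y = (Nat.totient ((n : ℤ) + b).toNat : ℝ) / (Nat.totient ((n : ℤ) + d).toNat : ℝ)}

lemma filter_primeFactors_le_eq {m N Y : ℕ} {x : ℤ} {S : Finset ℕ} (hm : m ≠ 0) (hmY : m ≤ Y)
    (hN : N ≠ 0) (hNx : (N : ℤ) ≡ x [ZMOD m]) (hS : ∀ p ∈ S, p.Prime ∧ ¬p ∣ m ∧ p ≤ Y)
    (hsmall : ∀ p, p.Prime → p ≤ Y → ¬p ∣ m → (p ∣ N ↔ p ∈ S)) :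
    {p ∈ N.primeFactors | p ≤ Y} = {p ∈ m.primeFactors | ((p : ℕ) : ℤ) ∣ x} ∪ S := by
  have hdvd : ∀ p, p ∣ m → (p ∣ N ↔ (p : ℤ) ∣ x) := fun p hpm =>
    Int.natCast_dvd_natCast.symm.trans (hNx.of_dvd (Int.natCast_dvd_natCast.2 hpm)).dvd_iff
  ext p
  simp only [mem_filter, mem_union, Nat.mem_primeFactors]
  constructor
  · rintro ⟨⟨hp, hpN, -⟩, hpY⟩
    by_cases hpm : p ∣ m
    · exact Or.inl ⟨⟨hp, hpm, hm⟩, (hdvd p hpm).1 hpN⟩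
    · exact Or.inr ((hsmall p hp hpY hpm).1 hpN)
  · rintro (⟨⟨hp, hpm, -⟩, hpx⟩ | hpS)
    · exact ⟨⟨hp, (hdvd p hpm).2 hpx, hN⟩, (Nat.le_of_dvd (Nat.pos_of_ne_zero hm) hpm).trans hmY⟩
    · obtain ⟨hp, hpm, hpY⟩ := hS p hpS
      exact ⟨⟨hp, (hsmall p hp hpY hpm).2 hpS, hN⟩, hpY⟩

lemma toNat_add_le_pow {m n Y : ℕ} (hY : Y ≠ 0) (hn : n < m * 8 ^ Y) (b : ℤ) :
    ((n : ℤ) + b).toNat ≤ (8 * (m + b.natAbs)) ^ Y := by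
  have h1 : ((n : ℤ) + b).toNat ≤ n + b.natAbs := by omega
  have h2 : b.natAbs ≤ b.natAbs * 8 ^ Y := Nat.le_mul_of_pos_right _ (by positivity)
  calc ((n : ℤ) + b).toNat ≤ (m + b.natAbs) * 8 ^ Y := by rw [add_mul]; omega
    _ ≤ (m + b.natAbs) ^ Y * 8 ^ Y := by gcongr; exact Nat.le_self_pow hY _
    _ = (8 * (m + b.natAbs)) ^ Y := by rw [mul_pow, mul_comm]

lemma tendsto_totient_div_self_shift {m : ℕ} (hm : m ≠ 0) {b r : ℤ} {S : Finset ℕ}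
    (hS : ∀ p ∈ S, p.Prime ∧ ¬p ∣ m) {n : ℕ → ℕ} (hYn : ∀ Y, Y ≤ n Y)
    (hn : ∀ Y, n Y < m * 8 ^ Y) (hnr : ∀ Y, (n Y : ℤ) ≡ r [ZMOD m])
    (hsmall : ∀ Y p, p.Prime → p ≤ Y → ¬p ∣ m → ((p : ℤ) ∣ n Y + b ↔ p ∈ S)) :
    Tendsto (fun Y => (φ ((n Y : ℤ) + b).toNat : ℝ) / ((n Y : ℤ) + b).toNat) atTop
      (𝓝 (coprimeDensity ({p ∈ m.primeFactors | ((p : ℕ) : ℤ) ∣ r + b} ∪ S))) := by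
  refine tendsto_totient_div_self (8 * (m + b.natAbs)) ?_
  filter_upwards [eventually_ge_atTop (m + S.sup id + b.natAbs + 1)] with Y hY
  have hYn := hYn Y
  have hN : (((n Y : ℤ) + b).toNat : ℤ) = n Y + b := Int.toNat_of_nonneg (by omega)
  refine ⟨by omega, toNat_add_le_pow (by omega) (hn Y) b,
    filter_primeFactors_le_eq hm (by omega) (by omega) (hN ▸ (hnr Y).add_right b)
      (fun p hp => ⟨(hS p hp).1, (hS p hp).2, (le_sup (f := id) hp).trans (by omega)⟩)
      fun p hp hpY hpm => ?_⟩
  rw [← hsmall Y p hp hpY hpm, ← Int.natCast_dvd_natCast, hN]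

lemma tendsto_add_div_add_atTop (b d : ℝ) :
    Tendsto (fun x : ℝ => (x + b) / (x + d)) atTop (𝓝 1) := by
  have h : Tendsto (fun x : ℝ => 1 + (b - d) / (x + d)) atTop (𝓝 (1 + 0)) :=
    tendsto_const_nhds.add <| tendsto_const_nhds.div_atTop <|
      tendsto_atTop_add_const_right _ d tendsto_id
  rw [add_zero] at h
  refine h.congr' ?_
  filter_upwards [eventually_gt_atTop (-d)] with x hx
  have : x + d ≠ 0 := by linarith
  field_simp
  ring

lemma coprimeDensity_div_mem_closure_totientRatios {m : ℕ} (hm : m ≠ 0) (hm2 : 2 ∣ m)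
    (b d r : ℤ) {S T : Finset ℕ} (hST : Disjoint S T)
    (hSTm : ∀ p ∈ S ∪ T, p.Prime ∧ ¬p ∣ m ∧ ¬(p : ℤ) ∣ b - d) :
    coprimeDensity ({p ∈ m.primeFactors | ((p : ℕ) : ℤ) ∣ r + b} ∪ S) /
        coprimeDensity ({p ∈ m.primeFactors | ((p : ℕ) : ℤ) ∣ r + d} ∪ T) ∈
      closure (totientRatios m b d r) := by
  choose n hYn hn hnr hsmall using exists_shift_dvd_iff hm hm2 b d r hST hSTm
  have hb := tendsto_totient_div_self_shift hm
    (fun p hp => (hSTm p (mem_union_left T hp)).imp_right And.left) hYn hn hnr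
    fun Y p hp hpY hpm => (hsmall Y p hp hpY hpm).1
  have hd := tendsto_totient_div_self_shift hm
    (fun p hp => (hSTm p (mem_union_right S hp)).imp_right And.left) hYn hn hnr
    fun Y p hp hpY hpm => (hsmall Y p hp hpY hpm).2
  have hTd : 1 ∉ {p ∈ m.primeFactors | ((p : ℕ) : ℤ) ∣ r + d} ∪ T := fun h =>
    Nat.not_prime_one <| (mem_union.1 h).elim (fun h => Nat.prime_of_mem_primeFactors
      (mem_filter.1 h).1) fun h => (hSTm 1 (mem_union_right S h)).1
  have hlarge : ∀ᶠ Y in atTop, 0 < (n Y : ℤ) + b ∧ 0 < (n Y : ℤ) + d ∧ 0 < n Y := by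
    filter_upwards [eventually_gt_atTop (b.natAbs + d.natAbs)] with Y hY
    have := hYn Y
    omega
  have hcast : ∀ x : ℤ, 0 < x → ((x.toNat : ℕ) : ℝ) = x := fun x hx => by
    rw [← Int.cast_natCast, Int.toNat_of_nonneg hx.le]
  have hratio : Tendsto (fun Y => (((n Y : ℤ) + b).toNat : ℝ) / ((n Y : ℤ) + d).toNat)
      atTop (𝓝 1) := by
    refine ((tendsto_add_div_add_atTop b d).comp <| tendsto_natCast_atTop_atTop.comp <|
      tendsto_atTop_mono hYn tendsto_id).congr' ?_
    filter_upwards [hlarge] with Y ⟨hb0, hd0, _⟩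
    simp [hcast _ hb0, hcast _ hd0]
  refine mem_closure_of_tendsto (b := atTop) (f := fun Y : ℕ =>
    (φ ((n Y : ℤ) + b).toNat : ℝ) / φ ((n Y : ℤ) + d).toNat) ?_ ?_
  · have := hratio.mul (hb.div hd (coprimeDensity_pos hTd).ne')
    rw [one_mul] at this
    refine this.congr' ?_
    filter_upwards [hlarge] with Y ⟨hb0, hd0, _⟩
    have hb0' : (((n Y : ℤ) + b).toNat : ℝ) ≠ 0 := by rw [hcast _ hb0]; exact_mod_cast hb0.ne'
    have hd0' : (((n Y : ℤ) + d).toNat : ℝ) ≠ 0 := by rw [hcast _ hd0]; exact_mod_cast hd0.ne'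
    have hφ : (φ ((n Y : ℤ) + d).toNat : ℝ) ≠ 0 := by
      exact_mod_cast (Nat.totient_pos.2 (by omega)).ne'
    simp only [Pi.div_apply]
    field_simp
  · filter_upwards [hlarge] with Y ⟨hb0, hd0, hn0⟩
    exact ⟨n Y, hn0, hb0, hd0, hnr Y, rfl⟩

lemma Ioi_subset_closure_totientRatios {m : ℕ} (hm : m ≠ 0) (hm2 : 2 ∣ m) {b d : ℤ}
    (hbd : b ≠ d) (r : ℤ) : Set.Ioi 0 ⊆ closure (totientRatios m b d r) := by
  intro t ht
  set Ab := {p ∈ m.primeFactors | ((p : ℕ) : ℤ) ∣ r + b}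
  set Ad := {p ∈ m.primeFactors | ((p : ℕ) : ℤ) ∣ r + d}
  have hone : ∀ x : ℤ, 1 ∉ {p ∈ m.primeFactors | ((p : ℕ) : ℤ) ∣ x} := fun x h =>
    Nat.not_prime_one (Nat.prime_of_mem_primeFactors (mem_filter.1 h).1)
  set c := coprimeDensity Ab / coprimeDensity Ad
  have hc : 0 < c := div_pos (coprimeDensity_pos (hone _)) (coprimeDensity_pos (hone _))
  have hF : m * (b - d).natAbs ≠ 0 := mul_ne_zero hm (by omega)
  refine closure_closure (s := totientRatios m b d r) ▸ mul_div_cancel₀ t hc.ne' ▸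
    map_mem_closure (continuous_const_mul c)
      (Ioi_subset_closure_coprimeDensity_div (m * (b - d).natAbs).primeFactors (div_pos ht hc)) ?_
  rintro _ ⟨S, T, hST, hSTF, rfl⟩
  have hSTm : ∀ p ∈ S ∪ T, p.Prime ∧ ¬p ∣ m ∧ ¬(p : ℤ) ∣ b - d := fun p hp => by
    obtain ⟨hp, hpF⟩ := hSTF p hp
    have hpm : ¬p ∣ m * (b - d).natAbs := fun h => hpF (Nat.mem_primeFactors.2 ⟨hp, h, hF⟩)
    rw [hp.dvd_mul, not_or] at hpm
    exact ⟨hp, hpm.1, Int.natCast_dvd.not.2 hpm.2⟩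
  have hdisj : ∀ (x : ℤ) (U : Finset ℕ), U ⊆ S ∪ T →
      Disjoint {p ∈ m.primeFactors | ((p : ℕ) : ℤ) ∣ x} U := fun x U hU =>
    disjoint_left.2 fun p hp hpU =>
      (hSTm p (hU hpU)).2.1 (Nat.dvd_of_mem_primeFactors (mem_filter.1 hp).1)
  convert coprimeDensity_div_mem_closure_totientRatios hm hm2 b d r hST hSTm using 1
  rw [coprimeDensity_union (hdisj _ S subset_union_left),
    coprimeDensity_union (hdisj _ T subset_union_right), div_mul_div_comm]

theorem dense_totient_quotient_shift (m : ℕ) (hm : 0 < m) (b d r : ℤ) (hbd : b ≠ d) :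
    Set.Ioi (0 : ℝ) ⊆
      closure {y : ℝ | ∃ n : ℕ, 0 < n ∧ 0 < (n : ℤ) + b ∧ 0 < (n : ℤ) + d ∧
        (n : ℤ) ≡ r [ZMOD (m : ℤ)] ∧
        y = (Nat.totient ((n : ℤ) + b).toNat : ℝ) / (Nat.totient ((n : ℤ) + d).toNat : ℝ)} := by
  refine (Ioi_subset_closure_totientRatios (m := 2 * m) (by omega) (dvd_mul_right 2 m) hbd r).trans
    (closure_mono ?_)
  rintro y ⟨n, hn, hb, hd, hr, rfl⟩
  exact ⟨n, hn, hb, hd, Int.ModEq.of_mul_left 2 (by exact_mod_cast hr), rfl⟩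
end

section
/- Let a, c ∈ ℕ and b, d ∈ ℤ with ad = bc. Then the set L of values φ(an+b)/φ(cn+d), where n ranges over positive integers with n > max{-b/a, -d/c}, is finite with cardinality #L = 2^{ω(τ_c(a)·τ_a(c))}, where ω(n) is the number of distinct prime factors of n. -/
/-- `tau n m` is the product of the prime powers `p^k` exactly dividing `m` with `p ∤ n`,
i.e. the part of `m` coprime to `n`. -/
def tau (n m : ℕ) : ℕ :=
  ∏ p ∈ m.primeFactors.filter (fun p => ¬ p ∣ n), p ^ m.factorization p

/-!
Write `g = gcd(a, c)`, `a = g a'`, `c = g c'`. Since `a'` and `c'` are coprime, `a d = b c` forces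
`b = a' b₀` and `d = c' b₀`, so `a n + b = a' t` and `c n + d = c' t` with `t = g n + b₀`. By
Euler's product, `φ(a' t) / φ(c' t) = (a' ∏_{p ∣ a', p ∤ t} (1 - 1/p)) / (c' ∏_{p ∣ c', p ∤ t} (1 - 1/p))`,
which only depends on the set `U` of primes of `a' c'` not dividing `t`, and determines it: distinct
finite sets of primes have distinct products `∏ (1 - 1/p)` (look at the largest prime of their
symmetric difference), and the prime factors of `a'` and `c'` are disjoint. A prime of `a' c'`
dividing `g` divides `t` iff it divides `b₀`, whereas the primes of `a' c'` prime to `g`, which are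
the primes dividing exactly one of `a`, `c`, i.e. those of `τ_c(a) τ_a(c)`, can be placed in or
out of `U` independently by the Chinese remainder theorem. So exactly `2 ^ ω(τ_c(a) τ_a(c))` values
occur.
-/

open Finset

lemma Nat.Prime.dvd_prod_primes_iff {q : ℕ} (hq : q.Prime) {s : Finset ℕ}
    (hs : ∀ p ∈ s, p.Prime) : q ∣ ∏ p ∈ s, p ↔ q ∈ s := by
  conv_rhs => rw [← Nat.primeFactors_prod hs]
  simp [Nat.mem_primeFactors, hq, (prod_pos fun p hp => (hs p hp).pos).ne']

lemma Nat.Prime.not_dvd_prod_sub_one {q : ℕ} (hq : q.Prime) {s : Finset ℕ}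
    (hs : ∀ p ∈ s, 2 ≤ p ∧ p ≤ q) : ¬ q ∣ ∏ p ∈ s, (p - 1) := by
  rw [hq.prime.dvd_finsetProd_iff]
  rintro ⟨p, hp, hdvd⟩
  have := hs p hp
  have := Nat.le_of_dvd (by omega) hdvd
  omega

lemma prod_sub_one_mul_prod_ne {X Y : Finset ℕ} (hX : ∀ p ∈ X, p.Prime)
    (hY : ∀ p ∈ Y, p.Prime) (hXY : Disjoint X Y) {q : ℕ} (hqX : q ∈ X)
    (hq : ∀ p ∈ X ∪ Y, p ≤ q) :
    (∏ p ∈ X, (p - 1)) * ∏ p ∈ Y, p ≠ (∏ p ∈ Y, (p - 1)) * ∏ p ∈ X, p := by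
  intro h
  have hqp := hX q hqX
  have hdvd : q ∣ (∏ p ∈ X, (p - 1)) * ∏ p ∈ Y, p :=
    h ▸ dvd_mul_of_dvd_right (dvd_prod_of_mem _ hqX) _
  rcases hqp.dvd_mul.1 hdvd with hdvd | hdvd
  · exact hqp.not_dvd_prod_sub_one
      (fun p hp => ⟨(hX p hp).two_le, hq p (mem_union_left _ hp)⟩) hdvd
  · exact disjoint_left.1 hXY hqX ((hqp.dvd_prod_primes_iff hY).1 hdvd)

lemma eq_empty_of_prod_sub_one_mul_prod_eq {X Y : Finset ℕ} (hX : ∀ p ∈ X, p.Prime)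
    (hY : ∀ p ∈ Y, p.Prime) (hXY : Disjoint X Y)
    (h : (∏ p ∈ X, (p - 1)) * ∏ p ∈ Y, p = (∏ p ∈ Y, (p - 1)) * ∏ p ∈ X, p) :
    X ∪ Y = ∅ := by
  by_contra hne
  replace hne := nonempty_iff_ne_empty.2 hne
  have hq := fun p hp => le_max' (X ∪ Y) p hp
  rcases mem_union.1 (max'_mem _ hne) with hqX | hqY
  · exact prod_sub_one_mul_prod_ne hX hY hXY hqX hq h
  · exact prod_sub_one_mul_prod_ne hY hX hXY.symm hqY (union_comm X Y ▸ hq) h.symm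

section EulerProduct

variable {K : Type*} [Field K] [CharZero K]

lemma prod_one_sub_inv_ne_zero {s : Finset ℕ} (hs : ∀ p ∈ s, p.Prime) :
    ∏ p ∈ s, (1 - (p : K)⁻¹) ≠ 0 :=
  prod_ne_zero_iff.2 fun p hp => sub_ne_zero.2 fun h =>
    (hs p hp).one_lt.ne' (by exact_mod_cast inv_eq_one.1 h.symm)

lemma prod_one_sub_inv_eq_div {s : Finset ℕ} (hs : ∀ p ∈ s, p.Prime) :
    ∏ p ∈ s, (1 - (p : K)⁻¹) = ((∏ p ∈ s, (p - 1) : ℕ) : K) / (∏ p ∈ s, p : ℕ) := by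
  rw [Nat.cast_prod, Nat.cast_prod, ← prod_div_distrib]
  refine prod_congr rfl fun p hp => ?_
  have hp0 : (p : K) ≠ 0 := by exact_mod_cast (hs p hp).ne_zero
  rw [Nat.cast_sub (hs p hp).one_le, Nat.cast_one, sub_div, div_self hp0, one_div]

theorem prod_one_sub_inv_injOn :
    Set.InjOn (fun s : Finset ℕ => ∏ p ∈ s, (1 - (p : K)⁻¹)) {s | ∀ p ∈ s, p.Prime} := by
  intro X hX Y hY h
  simp only [Set.mem_ofPred_eq] at hX hY h
  have hXY : ∀ p ∈ X \ Y, p.Prime := fun p hp => hX p (mem_sdiff.1 hp).1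
  have hYX : ∀ p ∈ Y \ X, p.Prime := fun p hp => hY p (mem_sdiff.1 hp).1
  have hcancel : ∏ p ∈ X \ Y, (1 - (p : K)⁻¹) = ∏ p ∈ Y \ X, (1 - (p : K)⁻¹) := by
    rw [← prod_inter_mul_prod_sdiff X Y, ← prod_inter_mul_prod_sdiff Y X, inter_comm Y X] at h
    exact mul_left_cancel₀ (prod_one_sub_inv_ne_zero fun p hp => hX p (mem_inter.1 hp).1) h
  rw [prod_one_sub_inv_eq_div hXY, prod_one_sub_inv_eq_div hYX,
    div_eq_div_iff (Nat.cast_ne_zero.2 (prod_ne_zero_iff.2 fun p hp => (hXY p hp).ne_zero))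
      (Nat.cast_ne_zero.2 (prod_ne_zero_iff.2 fun p hp => (hYX p hp).ne_zero))] at hcancel
  have hempty := eq_empty_of_prod_sub_one_mul_prod_eq hXY hYX disjoint_sdiff_sdiff
    (by exact_mod_cast hcancel)
  rw [union_eq_empty, sdiff_eq_empty_iff_subset, sdiff_eq_empty_iff_subset] at hempty
  exact subset_antisymm hempty.1 hempty.2

lemma Nat.cast_totient_eq_mul_prod (n : ℕ) :
    (n.totient : K) = n * ∏ p ∈ n.primeFactors, (1 - (p : K)⁻¹) := by
  simpa using congrArg (Rat.cast : ℚ → K) (Nat.totient_eq_mul_prod_factors n)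

lemma Nat.cast_totient_mul_eq {m t : ℕ} (hm : m ≠ 0) (ht : t ≠ 0) :
    ((m * t).totient : K) =
      t.totient * (m * ∏ p ∈ m.primeFactors.filter (¬ · ∣ t), (1 - (p : K)⁻¹)) := by
  have hsdiff : m.primeFactors \ t.primeFactors = m.primeFactors.filter (¬ · ∣ t) := by
    ext p
    simp +contextual [Nat.mem_primeFactors, ht]
  rw [Nat.cast_totient_eq_mul_prod, Nat.cast_totient_eq_mul_prod t, Nat.primeFactors_mul hm ht,
    union_comm, ← union_sdiff_self_eq_union, prod_union disjoint_sdiff, hsdiff]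
  push_cast
  ring

end EulerProduct

/-- `φ (m * t) / φ (m' * t)` as a function of the set `U` of primes of `m * m'` not dividing `t`. -/
noncomputable def totientRatio (m m' : ℕ) (U : Finset ℕ) : ℝ :=
  (m * ∏ p ∈ m.primeFactors ∩ U, (1 - (p : ℝ)⁻¹)) /
    (m' * ∏ p ∈ m'.primeFactors ∩ U, (1 - (p : ℝ)⁻¹))

lemma totient_mul_div_totient_mul_eq_totientRatio {m m' t : ℕ} (hm : m ≠ 0) (hm' : m' ≠ 0)
    (ht : t ≠ 0) :
    ((m * t).totient : ℝ) / (m' * t).totient =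
      totientRatio m m' ((m * m').primeFactors.filter (¬ · ∣ t)) := by
  have hφ : (t.totient : ℝ) ≠ 0 := by
    exact_mod_cast (Nat.totient_pos.2 (Nat.pos_of_ne_zero ht)).ne'
  rw [totientRatio, inter_filter, inter_filter,
    inter_eq_left.2 (Nat.primeFactors_mono (dvd_mul_right m m') (mul_ne_zero hm hm')),
    inter_eq_left.2 (Nat.primeFactors_mono (dvd_mul_left m' m) (mul_ne_zero hm hm')),
    Nat.cast_totient_mul_eq hm ht, Nat.cast_totient_mul_eq hm' ht, mul_div_mul_left _ _ hφ]

theorem totientRatio_injOn {m m' : ℕ} (hm : m ≠ 0) (hm' : m' ≠ 0) (hmm' : m.Coprime m') :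
    Set.InjOn (totientRatio m m') ((m * m').primeFactors.powerset : Set (Finset ℕ)) := by
  intro U₁ hU₁ U₂ hU₂ h
  rw [mem_coe, mem_powerset, Nat.primeFactors_mul hm hm'] at hU₁ hU₂
  have hprime : ∀ (n : ℕ) (U : Finset ℕ), ∀ p ∈ n.primeFactors ∩ U, p.Prime :=
    fun n U p hp => Nat.prime_of_mem_primeFactors (mem_inter.1 hp).1
  have hdisj := hmm'.disjoint_primeFactors
  have hcross : ∏ p ∈ m.primeFactors ∩ U₁ ∪ m'.primeFactors ∩ U₂, (1 - (p : ℝ)⁻¹) =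
      ∏ p ∈ m.primeFactors ∩ U₂ ∪ m'.primeFactors ∩ U₁, (1 - (p : ℝ)⁻¹) := by
    rw [prod_union (disjoint_of_subset_left inter_subset_left
        (disjoint_of_subset_right inter_subset_left hdisj)),
      prod_union (disjoint_of_subset_left inter_subset_left
        (disjoint_of_subset_right inter_subset_left hdisj))]
    rw [totientRatio, totientRatio, div_eq_div_iff
      (mul_ne_zero (by exact_mod_cast hm') (prod_one_sub_inv_ne_zero (hprime m' U₁)))
      (mul_ne_zero (by exact_mod_cast hm') (prod_one_sub_inv_ne_zero (hprime m' U₂)))] at h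
    have hmm : (m : ℝ) * m' ≠ 0 := by positivity
    apply mul_left_cancel₀ hmm
    linear_combination h
  have hsets := prod_one_sub_inv_injOn
    (fun p hp => (mem_union.1 hp).elim (hprime m U₁ p) (hprime m' U₂ p))
    (fun p hp => (mem_union.1 hp).elim (hprime m U₂ p) (hprime m' U₁ p)) hcross
  ext p
  have hp : p ∈ m.primeFactors → p ∉ m'.primeFactors := fun h => disjoint_left.1 hdisj h
  have hp₁ : p ∈ U₁ → p ∈ m.primeFactors ∪ m'.primeFactors := fun h => hU₁ h
  have hp₂ : p ∈ U₂ → p ∈ m.primeFactors ∪ m'.primeFactors := fun h => hU₂ h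
  have hp₃ := congrArg (p ∈ ·) hsets
  simp only [mem_union, mem_inter, eq_iff_iff] at hp₁ hp₂ hp₃
  tauto

theorem totientRatio_union_injOn {m m' : ℕ} (hm : m ≠ 0) (hm' : m' ≠ 0) (hmm' : m.Coprime m')
    {F D : Finset ℕ} (hFD : Disjoint F D) (hF : F ⊆ (m * m').primeFactors)
    (hD : D ⊆ (m * m').primeFactors) :
    Set.InjOn (fun S => totientRatio m m' (F ∪ S)) (D.powerset : Set (Finset ℕ)) := by
  refine (totientRatio_injOn hm hm' hmm').comp (fun S₁ hS₁ S₂ hS₂ heq => ?_) fun S hS => ?_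
  · rw [mem_coe, mem_powerset] at hS₁ hS₂
    rw [← union_sdiff_cancel_left (disjoint_of_subset_right hS₁ hFD),
      ← union_sdiff_cancel_left (disjoint_of_subset_right hS₂ hFD)]
    exact congrArg (· \ F) heq
  · rw [mem_coe, mem_powerset] at hS ⊢
    exact union_subset hF (hS.trans hD)

lemma Int.exists_nat_ge_mul_add_modEq {g Q : ℕ} (hQ : 0 < Q) (hgQ : g.Coprime Q) (b r : ℤ)
    (N : ℕ) : ∃ n : ℕ, N ≤ n ∧ (g : ℤ) * n + b ≡ r [ZMOD Q] := by
  obtain ⟨u, v, huv⟩ := Nat.isCoprime_iff_coprime.2 hgQ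
  set m : ℤ := u * (r - b) + Q * (|u * (r - b)| + N)
  have hm : (N : ℤ) ≤ m := by
    have : (1 : ℤ) ≤ Q := by exact_mod_cast hQ
    nlinarith [le_abs_self (u * (r - b)), neg_abs_le (u * (r - b)), abs_nonneg (u * (r - b))]
  refine ⟨m.toNat, by omega, Int.modEq_iff_dvd.2 ⟨v * (r - b) - g * (|u * (r - b)| + N), ?_⟩⟩
  rw [Int.toNat_of_nonneg (by omega)]
  linear_combination (b - r) * huv

/-- Take `g * n + b ≡ ∏ p ∈ E \ S, p [ZMOD ∏ p ∈ E, p]`. -/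
lemma exists_nat_ge_forall_dvd_mul_add_iff {g : ℕ} {E : Finset ℕ}
    (hE : ∀ p ∈ E, p.Prime ∧ ¬ p ∣ g) (S : Finset ℕ) (b : ℤ) (N : ℕ) :
    ∃ n : ℕ, N ≤ n ∧ ∀ p ∈ E, ((p : ℤ) ∣ g * n + b ↔ p ∉ S) := by
  have hgQ : g.Coprime (∏ p ∈ E, p) := Nat.Coprime.prod_right fun p hp =>
    Nat.coprime_comm.1 ((hE p hp).1.coprime_iff_not_dvd.2 (hE p hp).2)
  obtain ⟨n, hn, hmod⟩ := Int.exists_nat_ge_mul_add_modEq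
    (prod_pos fun p hp => (hE p hp).1.pos) hgQ b (∏ p ∈ E \ S, p : ℕ) N
  refine ⟨n, hn, fun p hp => ?_⟩
  rw [(hmod.of_dvd (Int.natCast_dvd_natCast.2 (dvd_prod_of_mem _ hp))).dvd_iff,
    Int.natCast_dvd_natCast, (hE p hp).1.dvd_prod_primes_iff
      fun q hq => (hE q (mem_sdiff.1 hq).1).1, mem_sdiff]
  exact and_iff_right hp

lemma filter_not_dvd_mul_add (P : Finset ℕ) (g n : ℕ) (b : ℤ) :
    P.filter (fun p : ℕ => ¬ (p : ℤ) ∣ g * n + b) =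
      P.filter (fun p => p ∣ g ∧ ¬ (p : ℤ) ∣ b) ∪
        (P.filter (fun p => ¬ p ∣ g)).filter (fun p => ¬ (p : ℤ) ∣ g * n + b) := by
  ext p
  simp only [mem_filter, mem_union]
  by_cases hp : p ∣ g
  · have : (p : ℤ) ∣ g * n := (Int.natCast_dvd_natCast.2 hp).mul_right _
    simp [hp, dvd_add_right this]
  · simp [hp]

theorem setOf_totient_ratio_eq_image {g a' c' : ℕ} (hg : 0 < g) (ha' : a' ≠ 0) (hc' : c' ≠ 0)
    (b : ℤ) :
    {y : ℝ | ∃ n : ℕ, 0 < n ∧ 0 < (g : ℤ) * n + b ∧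
        y = ((a' * ((g : ℤ) * n + b).toNat).totient : ℝ) /
          (c' * ((g : ℤ) * n + b).toNat).totient} =
      (fun S => totientRatio a' c'
          ((a' * c').primeFactors.filter (fun p => p ∣ g ∧ ¬ (p : ℤ) ∣ b) ∪ S)) ''
        ↑((a' * c').primeFactors.filter (fun p => ¬ p ∣ g)).powerset := by
  set D := (a' * c').primeFactors.filter (fun p => ¬ p ∣ g)
  have hvalue : ∀ n : ℕ, 0 < (g : ℤ) * n + b →
      ((a' * ((g : ℤ) * n + b).toNat).totient : ℝ) / (c' * ((g : ℤ) * n + b).toNat).totient =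
        totientRatio a' c' ((a' * c').primeFactors.filter (fun p => p ∣ g ∧ ¬ (p : ℤ) ∣ b) ∪
          D.filter (fun p : ℕ => ¬ (p : ℤ) ∣ g * n + b)) := by
    intro n ht
    rw [totient_mul_div_totient_mul_eq_totientRatio ha' hc' (by omega), ← filter_not_dvd_mul_add]
    congr 2 with p
    rw [← Int.natCast_dvd_natCast, Int.toNat_of_nonneg ht.le]
  ext y
  simp only [Set.mem_ofPred_eq, Set.mem_image, mem_coe, mem_powerset]
  constructor
  · rintro ⟨n, -, ht, rfl⟩
    exact ⟨_, filter_subset _ _, (hvalue n ht).symm⟩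
  · rintro ⟨S, hS, rfl⟩
    have hD : ∀ p ∈ D, p.Prime ∧ ¬ p ∣ g := fun p hp =>
      ⟨Nat.prime_of_mem_primeFactors (mem_filter.1 hp).1, (mem_filter.1 hp).2⟩
    obtain ⟨n, hn, hdvd⟩ := exists_nat_ge_forall_dvd_mul_add_iff hD S b (b.natAbs + 1)
    have ht : 0 < (g : ℤ) * n + b := by
      have : (n : ℤ) ≤ g * n := le_mul_of_one_le_left (by positivity) (by exact_mod_cast hg)
      omega
    refine ⟨n, by omega, ht, ?_⟩
    rw [hvalue n ht]
    congr 2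
    ext p
    rw [mem_filter]
    exact ⟨fun hp => ⟨hS hp, (hdvd p (hS hp)).not.2 (not_not.2 hp)⟩,
      fun hp => not_not.1 ((hdvd p hp.1).not.1 hp.2)⟩

lemma exists_eq_div_gcd_mul {a c : ℕ} (ha : a ≠ 0) {b d : ℤ} (h : (a : ℤ) * d = b * c) :
    ∃ b₀ : ℤ, b = (a / a.gcd c : ℕ) * b₀ ∧ d = (c / a.gcd c : ℕ) * b₀ := by
  have hg := Nat.gcd_pos_of_pos_left c (Nat.pos_of_ne_zero ha)
  have ha' : (a / a.gcd c : ℕ) ≠ 0 :=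
    (Nat.div_ne_zero_iff_of_dvd (Nat.gcd_dvd_left a c)).2 ⟨ha, hg.ne'⟩
  have hcop := Nat.isCoprime_iff_coprime.2 (Nat.coprime_div_gcd_div_gcd hg)
  have hdiv : ((a / a.gcd c : ℕ) : ℤ) * d = b * (c / a.gcd c : ℕ) := by
    refine mul_left_cancel₀ (by exact_mod_cast hg.ne' : ((a.gcd c : ℕ) : ℤ) ≠ 0) ?_
    rw [← mul_assoc, mul_left_comm, ← Nat.cast_mul, ← Nat.cast_mul,
      Nat.mul_div_cancel' (Nat.gcd_dvd_left a c), Nat.mul_div_cancel' (Nat.gcd_dvd_right a c), h]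
  obtain ⟨b₀, rfl⟩ := hcop.dvd_of_dvd_mul_right ⟨d, hdiv.symm⟩
  refine ⟨b₀, rfl, mul_left_cancel₀ (by exact_mod_cast ha' : ((a / a.gcd c : ℕ) : ℤ) ≠ 0) ?_⟩
  rw [hdiv]
  ring

lemma Int.toNat_natCast_mul {x : ℤ} (hx : 0 ≤ x) (m : ℕ) :
    ((m : ℤ) * x).toNat = m * x.toNat := by
  lift x to ℕ using hx
  rw [← Nat.cast_mul, Int.toNat_natCast, Int.toNat_natCast]

lemma setOf_totient_ratio_eq_of_eq_mul {a c g a' c' : ℕ} (ha : a = g * a') (hc : c = g * c')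
    (ha' : 0 < a') (hc' : 0 < c') (b : ℤ) :
    {y : ℝ | ∃ n : ℕ, 0 < n ∧ 0 < (a : ℤ) * n + a' * b ∧ 0 < (c : ℤ) * n + c' * b ∧
        y = (((a : ℤ) * n + a' * b).toNat.totient : ℝ) / ((c : ℤ) * n + c' * b).toNat.totient} =
      {y : ℝ | ∃ n : ℕ, 0 < n ∧ 0 < (g : ℤ) * n + b ∧
        y = ((a' * ((g : ℤ) * n + b).toNat).totient : ℝ) /
          (c' * ((g : ℤ) * n + b).toNat).totient} := by
  subst ha hc
  ext y
  refine exists_congr fun n => and_congr_right fun _ => ?_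
  have hlin : ∀ m : ℕ, ((g * m : ℕ) : ℤ) * n + m * b = m * ((g : ℤ) * n + b) := fun m => by
    push_cast
    ring
  rw [hlin, hlin, mul_pos_iff_of_pos_left (by exact_mod_cast ha'),
    mul_pos_iff_of_pos_left (by exact_mod_cast hc'), and_self_left]
  exact and_congr_right fun ht => by rw [Int.toNat_natCast_mul ht.le, Int.toNat_natCast_mul ht.le]

lemma tau_ne_zero (n m : ℕ) : tau n m ≠ 0 :=
  prod_ne_zero_iff.2 fun _ hp =>
    pow_ne_zero _ (Nat.prime_of_mem_primeFactors (mem_filter.1 hp).1).ne_zero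

lemma primeFactors_tau (n m : ℕ) :
    (tau n m).primeFactors = m.primeFactors.filter (fun p => ¬ p ∣ n) := by
  ext p
  rw [Nat.mem_primeFactors_of_ne_zero (tau_ne_zero n m)]
  constructor
  · rintro ⟨hp, hdvd⟩
    obtain ⟨q, hq, hpq⟩ := (hp.prime.dvd_finsetProd_iff _).1 hdvd
    have hq' := Nat.prime_of_mem_primeFactors (mem_filter.1 hq).1
    rwa [(Nat.prime_dvd_prime_iff_eq hp hq').1 (hp.dvd_of_dvd_pow hpq)]
  · intro hp
    have hm := Nat.mem_primeFactors.1 (mem_filter.1 hp).1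
    exact ⟨hm.1, (dvd_pow_self p (hm.1.factorization_pos_of_dvd hm.2.2 hm.2.1).ne').trans
      (dvd_prod_of_mem _ hp)⟩

lemma primeFactors_tau_mul_tau {a c : ℕ} (ha : a ≠ 0) (hc : c ≠ 0) :
    (tau c a * tau a c).primeFactors =
      (a / a.gcd c * (c / a.gcd c)).primeFactors.filter (fun p => ¬ p ∣ a.gcd c) := by
  have hg := Nat.gcd_pos_of_pos_left c (Nat.pos_of_ne_zero ha)
  have ha' := Nat.div_ne_zero_iff_of_dvd (Nat.gcd_dvd_left a c) |>.2 ⟨ha, hg.ne'⟩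
  have hc' := Nat.div_ne_zero_iff_of_dvd (Nat.gcd_dvd_right a c) |>.2 ⟨hc, hg.ne'⟩
  rw [Nat.primeFactors_mul (tau_ne_zero c a) (tau_ne_zero a c), primeFactors_tau,
    primeFactors_tau]
  ext p
  simp only [mem_union, mem_filter, Nat.mem_primeFactors_of_ne_zero ha,
    Nat.mem_primeFactors_of_ne_zero hc, Nat.mem_primeFactors_of_ne_zero (mul_ne_zero ha' hc')]
  by_cases hp : p.Prime
  swap
  · simp [hp]
  have hpa : p ∣ a ↔ p ∣ a.gcd c ∨ p ∣ a / a.gcd c := by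
    rw [← hp.dvd_mul, Nat.mul_div_cancel' (Nat.gcd_dvd_left a c)]
  have hpc : p ∣ c ↔ p ∣ a.gcd c ∨ p ∣ c / a.gcd c := by
    rw [← hp.dvd_mul, Nat.mul_div_cancel' (Nat.gcd_dvd_right a c)]
  have hpg : p ∣ a.gcd c ↔ p ∣ a ∧ p ∣ c := Nat.dvd_gcd_iff
  have hcop : ¬ (p ∣ a / a.gcd c ∧ p ∣ c / a.gcd c) := fun h =>
    hp.one_lt.ne' (Nat.eq_one_of_dvd_coprimes (Nat.coprime_div_gcd_div_gcd hg) h.1 h.2)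
  simp only [hp, true_and, hp.dvd_mul]
  tauto

theorem card_totient_quotient (a c : ℕ) (ha : 0 < a) (hc : 0 < c) (b d : ℤ)
    (h : (a : ℤ) * d = b * c) :
    ({y : ℝ | ∃ n : ℕ, 0 < n ∧ 0 < (a : ℤ) * n + b ∧ 0 < (c : ℤ) * n + d ∧
        y = (Nat.totient ((a : ℤ) * n + b).toNat : ℝ) /
            (Nat.totient ((c : ℤ) * n + d).toNat : ℝ)}.Finite) ∧
    ({y : ℝ | ∃ n : ℕ, 0 < n ∧ 0 < (a : ℤ) * n + b ∧ 0 < (c : ℤ) * n + d ∧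
        y = (Nat.totient ((a : ℤ) * n + b).toNat : ℝ) /
            (Nat.totient ((c : ℤ) * n + d).toNat : ℝ)}.ncard
      = 2 ^ (tau c a * tau a c).primeFactors.card) := by
  obtain ⟨b₀, rfl, rfl⟩ := exists_eq_div_gcd_mul ha.ne' h
  have hg : 0 < a.gcd c := Nat.gcd_pos_of_pos_left c ha
  have ha' : 0 < a / a.gcd c := Nat.div_pos (Nat.gcd_le_left c ha) hg
  have hc' : 0 < c / a.gcd c := Nat.div_pos (Nat.gcd_le_right (m := a) hc) hg
  rw [setOf_totient_ratio_eq_of_eq_mul (Nat.mul_div_cancel' (Nat.gcd_dvd_left a c)).symm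
      (Nat.mul_div_cancel' (Nat.gcd_dvd_right a c)).symm ha' hc',
    setOf_totient_ratio_eq_image hg ha'.ne' hc'.ne', primeFactors_tau_mul_tau ha.ne' hc.ne']
  refine ⟨(finite_toSet _).image _, ?_⟩
  rw [(totientRatio_union_injOn ha'.ne' hc'.ne' (Nat.coprime_div_gcd_div_gcd hg) ?_
      (filter_subset _ _) (filter_subset _ _)).ncard_image, Set.ncard_coe_finset, card_powerset]
  exact disjoint_filter.2 fun p _ hp => not_not.2 hp.1
end

section
/- Let t₁, t₂, u₁, u₂ ∈ ℕ be such that gcd(t_i, u_j) = 1 for all i, j ∈ {1,2}, and assume rad(t₁) ≠ rad(t₂) or rad(u₁) ≠ rad(u₂). Then (φ(t₁)/t₁)/(φ(u₁)/u₁) ≠ (φ(t₂)/t₂)/(φ(u₂)/u₂). -/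
/-!
Since `φ n / n = ∏_{p ∣ n} (1 - 1/p)` and the totient is multiplicative on coprime arguments, the
assumed equality becomes `φ(t₁u₂)/(t₁u₂) = φ(t₂u₁)/(t₂u₁)`. The value `∏_{p ∈ S} (1 - 1/p)` determines
the finite set of primes `S`: cleared of denominators, it gives
`∏_A (p - 1) · ∏_B p = ∏_B (p - 1) · ∏_A p`, and once the common primes of `A` and `B` are cancelled,
the largest remaining prime divides exactly one side. So `t₁u₂` and `t₂u₁` have the same prime
factors, which coprimality splits into `rad t₁ = rad t₂` and `rad u₁ = rad u₂`.
-/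

/-- The radical (squarefree kernel) of a natural number. -/
def rad (n : ℕ) : ℕ := ∏ p ∈ n.primeFactors, p

open Finset
open scoped Nat

namespace Nat

theorem Prime.not_dvd_prod_sub_one_s11 {q : ℕ} (hq : q.Prime) {s : Finset ℕ}
    (hs : ∀ p ∈ s, p.Prime ∧ p ≤ q) : ¬ q ∣ ∏ p ∈ s, (p - 1) :=
  hq.prime.not_dvd_finsetProd fun p hp hdvd => by
    obtain ⟨hp, hpq⟩ := hs p hp
    have : q ≤ p - 1 := Nat.le_of_dvd (Nat.sub_pos_of_lt hp.one_lt) hdvd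
    have := hp.one_lt
    omega

theorem Prime.not_dvd_prod_primes {q : ℕ} (hq : q.Prime) {s : Finset ℕ}
    (hs : ∀ p ∈ s, p.Prime) (hqs : q ∉ s) : ¬ q ∣ ∏ p ∈ s, p :=
  hq.prime.not_dvd_finsetProd fun p hp hdvd =>
    hqs (((prime_dvd_prime_iff_eq hq (hs p hp)).1 hdvd) ▸ hp)

theorem prod_sub_one_mul_prod_ne {A B : Finset ℕ} {q : ℕ}
    (hA : ∀ p ∈ A, p.Prime ∧ p ≤ q) (hB : ∀ p ∈ B, p.Prime ∧ p ≤ q) (hqA : q ∈ A) (hqB : q ∉ B) :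
    (∏ p ∈ A, (p - 1)) * ∏ p ∈ B, p ≠ (∏ p ∈ B, (p - 1)) * ∏ p ∈ A, p := by
  have hq : q.Prime := (hA q hqA).1
  intro h
  have hdvd : q ∣ (∏ p ∈ A, (p - 1)) * ∏ p ∈ B, p :=
    h ▸ dvd_mul_of_dvd_right (dvd_prod_of_mem _ hqA) _
  rcases hq.prime.dvd_mul.1 hdvd with h₁ | h₂
  · exact hq.not_dvd_prod_sub_one_s11 hA h₁
  · exact hq.not_dvd_prod_primes (fun p hp => (hB p hp).1) hqB h₂

theorem eq_of_prod_sub_one_mul_prod_eq {A B : Finset ℕ}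
    (hA : ∀ p ∈ A, p.Prime) (hB : ∀ p ∈ B, p.Prime)
    (h : (∏ p ∈ A, (p - 1)) * ∏ p ∈ B, p = (∏ p ∈ B, (p - 1)) * ∏ p ∈ A, p) : A = B := by
  have hdiff : (∏ p ∈ A \ B, (p - 1)) * ∏ p ∈ B \ A, p =
      (∏ p ∈ B \ A, (p - 1)) * ∏ p ∈ A \ B, p := by
    have hC : 0 < (∏ p ∈ A ∩ B, (p - 1)) * ∏ p ∈ A ∩ B, p :=
      Nat.mul_pos (prod_pos fun p hp => Nat.sub_pos_of_lt (hA p (mem_inter.1 hp).1).one_lt)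
        (prod_pos fun p hp => (hA p (mem_inter.1 hp).1).pos)
    refine Nat.eq_of_mul_eq_mul_left hC ?_
    rw [← prod_inter_mul_prod_sdiff A B (· - 1), ← prod_inter_mul_prod_sdiff A B (fun p => p),
      ← prod_inter_mul_prod_sdiff B A (· - 1), ← prod_inter_mul_prod_sdiff B A (fun p => p),
      inter_comm B A] at h
    linarith
  by_contra hne
  have hD : (A \ B ∪ B \ A).Nonempty := by
    rw [nonempty_iff_ne_empty, Ne, union_eq_empty, sdiff_eq_empty_iff_subset,
      sdiff_eq_empty_iff_subset]
    exact fun h => hne (Subset.antisymm h.1 h.2)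
  set q := (A \ B ∪ B \ A).max' hD
  have hbound : ∀ p ∈ A \ B ∪ B \ A, p.Prime ∧ p ≤ q := fun p hp =>
    ⟨(mem_union.1 hp).elim (fun h => hA p (mem_sdiff.1 h).1) (fun h => hB p (mem_sdiff.1 h).1),
      le_max' _ p hp⟩
  have hbound₁ := fun p hp => hbound p (mem_union_left (B \ A) hp)
  have hbound₂ := fun p hp => hbound p (mem_union_right (A \ B) hp)
  rcases mem_union.1 (max'_mem _ hD) with hqA | hqB
  · exact prod_sub_one_mul_prod_ne hbound₁ hbound₂ hqA
      (fun h => (mem_sdiff.1 h).2 (mem_sdiff.1 hqA).1) hdiff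
  · exact prod_sub_one_mul_prod_ne hbound₂ hbound₁ hqB
      (fun h => (mem_sdiff.1 h).2 (mem_sdiff.1 hqB).1) hdiff.symm

theorem primeFactors_eq_of_totient_mul_eq {m n : ℕ} (hm : m ≠ 0) (hn : n ≠ 0)
    (h : φ m * n = φ n * m) : m.primeFactors = n.primeFactors := by
  refine eq_of_prod_sub_one_mul_prod_eq (fun p => prime_of_mem_primeFactors)
    (fun p => prime_of_mem_primeFactors)
    (Nat.eq_of_mul_eq_mul_left (Nat.pos_of_ne_zero (mul_ne_zero hm hn)) ?_)
  have hm' := totient_mul_prod_primeFactors m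
  have hn' := totient_mul_prod_primeFactors n
  set Pm := ∏ p ∈ m.primeFactors, p
  set Pn := ∏ p ∈ n.primeFactors, p
  set Qm := ∏ p ∈ m.primeFactors, (p - 1)
  set Qn := ∏ p ∈ n.primeFactors, (p - 1)
  calc m * n * (Qm * Pn)
      = (m * Qm) * (n * Pn) := by ring
    _ = (φ m * n) * (Pm * Pn) := by rw [← hm']; ring
    _ = (φ n * m) * (Pm * Pn) := by rw [h]
    _ = (n * Qn) * (m * Pm) := by rw [← hn']; ring
    _ = m * n * (Qn * Pm) := by ring

theorem primeFactors_eq_of_totient_div_eq {m n : ℕ} (hm : m ≠ 0) (hn : n ≠ 0)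
    (h : (φ m : ℝ) / m = φ n / n) : m.primeFactors = n.primeFactors := by
  rw [div_eq_div_iff (by positivity) (by positivity)] at h
  exact primeFactors_eq_of_totient_mul_eq hm hn (by exact_mod_cast h)

end Nat

theorem Finset.eq_of_union_eq_union {α : Type*} [DecidableEq α] {a₁ a₂ b₁ b₂ : Finset α}
    (h : a₁ ∪ b₂ = a₂ ∪ b₁) (h₁ : Disjoint a₁ b₁) (h₂ : Disjoint a₂ b₂) : a₁ = a₂ := by
  rw [disjoint_left] at h₁ h₂
  ext x
  have := congrArg (x ∈ ·) h
  simp only [mem_union, eq_iff_iff] at this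
  grind

theorem totient_ratio_ne (t₁ t₂ u₁ u₂ : ℕ) (ht₁ : 0 < t₁) (ht₂ : 0 < t₂)
    (hu₁ : 0 < u₁) (hu₂ : 0 < u₂)
    (h11 : Nat.gcd t₁ u₁ = 1) (h12 : Nat.gcd t₁ u₂ = 1)
    (h21 : Nat.gcd t₂ u₁ = 1) (h22 : Nat.gcd t₂ u₂ = 1)
    (hrad : rad t₁ ≠ rad t₂ ∨ rad u₁ ≠ rad u₂) :
    ((Nat.totient t₁ : ℝ) / t₁) / ((Nat.totient u₁ : ℝ) / u₁) ≠
      ((Nat.totient t₂ : ℝ) / t₂) / ((Nat.totient u₂ : ℝ) / u₂) := by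
  intro h
  have hφu₁ : (φ u₁ : ℝ) ≠ 0 := by exact_mod_cast (Nat.totient_pos.2 hu₁).ne'
  have hφu₂ : (φ u₂ : ℝ) ≠ 0 := by exact_mod_cast (Nat.totient_pos.2 hu₂).ne'
  have hcross : (φ (t₁ * u₂) : ℝ) / ↑(t₁ * u₂) = φ (t₂ * u₁) / ↑(t₂ * u₁) := by
    rw [Nat.totient_mul h12, Nat.totient_mul h21]
    push_cast
    field_simp at h ⊢
    linarith
  have hpf := Nat.primeFactors_eq_of_totient_div_eq (by positivity) (by positivity) hcross
  rw [Nat.primeFactors_mul ht₁.ne' hu₂.ne', Nat.primeFactors_mul ht₂.ne' hu₁.ne'] at hpf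
  have ht : t₁.primeFactors = t₂.primeFactors :=
    Finset.eq_of_union_eq_union hpf (Nat.Coprime.disjoint_primeFactors h11)
      (Nat.Coprime.disjoint_primeFactors h22)
  have hu : u₁.primeFactors = u₂.primeFactors := by
    rw [Finset.union_comm, Finset.union_comm t₂.primeFactors] at hpf
    exact Finset.eq_of_union_eq_union hpf.symm (Nat.Coprime.disjoint_primeFactors h11).symm
      (Nat.Coprime.disjoint_primeFactors h22).symm
  rcases hrad with hr | hr
  · exact hr (by rw [rad, rad, ht])
  · exact hr (by rw [rad, rad, hu])
end

section
/- Let b ∈ ℕ with b ≥ 2 and k ∈ ℕ with rad(b) ∤ k. Then ρ(kb, b) = ∞, i.e., with a := kb, g := gcd(a,b), a' := a/g, b' := b/g, there are infinitely many positive integers n > -b/a with rad(a'n + b') | g. -/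
/-- The set of positive integers `n` with `a'n + b' > 0` and `rad(a'n + b') ∣ g`,
where `g = gcd(a,b)`, `a' = a/g`, `b' = b/g`; its cardinality is `ρ(a,b)`. -/
def Rset (a : ℕ) (b : ℤ) : Set ℕ :=
  {n : ℕ | 0 < n ∧ 0 < (↑(a / Int.gcd a b) : ℤ) * n + b / (Int.gcd a b : ℤ) ∧
    rad ((↑(a / Int.gcd a b) * n + b / (Int.gcd a b : ℤ)).toNat) ∣ Int.gcd a b}

/-!
For `a = kb` we have `g = b`, `a' = k`, `b' = 1`, so `ρ(kb, b)` counts the `n > 0` with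
`rad(kn + 1) ∣ b`. Since `rad b ∤ k`, some prime `p ∣ b` is coprime to `k`, and by Euler's
theorem `p ^ (φ(k) j) = kn + 1` for some `n`, for every `j`. These `n` are unbounded, and
`rad(kn + 1) = p ∣ b`.
-/

open Nat

lemma rad_dvd_iff {n d : ℕ} : rad n ∣ d ↔ ∀ p ∈ n.primeFactors, p ∣ d :=
  ⟨fun h _ hp => (Finset.dvd_prod_of_mem _ hp).trans h,
    Finset.prod_primes_dvd d fun _ hp => (prime_of_mem_primeFactors hp).prime⟩

lemma exists_gt_mul_add_one_eq_pow {p k : ℕ} (hp : 1 < p) (hpk : p.Coprime k) (N : ℕ) :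
    ∃ n, N < n ∧ ∃ m ≠ 0, k * n + 1 = p ^ m := by
  have hk : k ≠ 0 := by rintro rfl; simp [coprime_zero_right] at hpk; omega
  have htot : 0 < φ k := totient_pos.mpr (pos_of_ne_zero hk)
  set m := φ k * (k * N + 1)
  have hpow_pos : 1 ≤ p ^ m := one_le_pow m p (by omega)
  have hmod : 1 ≡ p ^ m [MOD k] := by
    simpa [← pow_mul] using ((ModEq.pow_totient hpk).pow (k * N + 1)).symm
  obtain ⟨n, hn⟩ : k ∣ p ^ m - 1 := (modEq_iff_dvd' hpow_pos).mp hmod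
  have hpm : k * n + 1 = p ^ m := by omega
  refine ⟨n, ?_, m, Nat.mul_ne_zero htot.ne' (succ_ne_zero _), hpm⟩
  have hbig : k * N + 1 < p ^ m :=
    (Nat.lt_pow_self hp).trans_le (pow_le_pow_right₀ hp.le (Nat.le_mul_of_pos_left _ htot))
  exact Nat.lt_of_mul_lt_mul_left (a := k) (by omega : k * N < k * n)

lemma Rset_mul_eq_setOf_rad_dvd (k : ℕ) {b : ℕ} (hb : b ≠ 0) :
    Rset (k * b) b = {n | 0 < n ∧ rad (k * n + 1) ∣ b} := by
  have hg : Int.gcd ↑(k * b) (b : ℤ) = b := by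
    rw [Int.gcd_natCast_natCast, Nat.gcd_mul_left_left]
  ext n
  simp only [Rset, hg, Nat.mul_div_cancel _ (pos_of_ne_zero hb),
    Int.ediv_self (Int.natCast_ne_zero.mpr hb), Set.mem_ofPred_eq]
  norm_cast
  simp

theorem rho_kb_b_infinite_general (b : ℕ) (k : ℕ) (h : ¬ rad b ∣ k) :
    (Rset (k * b) (b : ℤ)).Infinite := by
  obtain ⟨p, hpb, hpk⟩ : ∃ p ∈ b.primeFactors, ¬ p ∣ k := by
    simpa only [rad_dvd_iff, not_forall, exists_prop] using h
  have hp : p.Prime := prime_of_mem_primeFactors hpb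
  rw [Rset_mul_eq_setOf_rad_dvd k (mem_primeFactors.mp hpb).2.2]
  refine Set.infinite_of_forall_exists_gt fun N => ?_
  obtain ⟨n, hNn, m, hm, hnm⟩ :=
    exists_gt_mul_add_one_eq_pow hp.one_lt (hp.coprime_iff_not_dvd.mpr hpk) N
  refine ⟨n, ⟨by omega, ?_⟩, hNn⟩
  rw [hnm, rad_dvd_iff, primeFactors_prime_pow hm hp]
  simpa using dvd_of_mem_primeFactors hpb

theorem rho_kb_b_infinite (b : ℕ) (hb : 2 ≤ b) (k : ℕ) (hk : 0 < k) (h : ¬ rad b ∣ k) :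
    (Rset (k * b) (b : ℤ)).Infinite :=
  rho_kb_b_infinite_general b k h
end

section
/- Let a ∈ ℕ, b ∈ ℤ, g := gcd(a,b), a' := a/g, b' := b/g. If rad(g) divides a', then there is at most one positive integer n with n > -b/a and rad(a'n+b') | g; such an n exists if and only if b' ≤ 0 and a' | 1 - b', in which case a'n + b' = 1. Hence ρ(a,b) = 1 if b' ≤ 0 and a' | 1 - b', and ρ(a,b) = 0 otherwise. -/
theorem dvd_rad_of_prime_of_dvd {p n : ℕ} (hp : p.Prime) (hpn : p ∣ n) (hn : n ≠ 0) :
    p ∣ rad n :=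
  Finset.dvd_prod_of_mem _ (Nat.mem_primeFactors.mpr ⟨hp, hpn, hn⟩)

theorem eq_one_of_rad_dvd_of_coprime {m g d : ℕ} (hm : m ≠ 0) (hg : g ≠ 0)
    (hmg : rad m ∣ g) (hgd : rad g ∣ d) (hmd : m.Coprime d) : m = 1 := by
  by_contra hm1
  obtain ⟨p, hp, hpm⟩ := Nat.exists_prime_and_dvd hm1
  have hpg : p ∣ g := (dvd_rad_of_prime_of_dvd hp hpm hm).trans hmg
  have hpd : p ∣ d := (dvd_rad_of_prime_of_dvd hp hpg hg).trans hgd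
  exact hp.not_dvd_one (hmd ▸ Nat.dvd_gcd hpm hpd)

/-- `Rset a b` is `radDvdSet (a / g) (b / g) g` with `g = gcd(a, b)`. -/
def radDvdSet (a' : ℕ) (b' : ℤ) (g : ℕ) : Set ℕ :=
  {n : ℕ | 0 < n ∧ 0 < (a' : ℤ) * n + b' ∧ rad (((a' : ℤ) * n + b').toNat) ∣ g}

section radDvdSet

variable {a' : ℕ} {b' : ℤ} {g : ℕ}

theorem eq_one_of_mem_radDvdSet (hcop : IsCoprime (a' : ℤ) b') (hg : g ≠ 0)
    (hrad : rad g ∣ a') {n : ℕ} (hn : n ∈ radDvdSet a' b' g) : (a' : ℤ) * n + b' = 1 := by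
  obtain ⟨-, hpos, hmg⟩ := hn
  set m : ℤ := (a' : ℤ) * n + b'
  have hm : (m.toNat : ℤ) = m := Int.toNat_of_nonneg hpos.le
  have hmd : m.toNat.Coprime a' := by
    rw [← Nat.isCoprime_iff_coprime, hm]
    have := hcop.symm.add_mul_right_left n
    rwa [add_comm, mul_comm] at this
  have := eq_one_of_rad_dvd_of_coprime (by omega) hg hmg hrad hmd
  omega

theorem radDvdSet_subsingleton (ha' : 0 < a') (hcop : IsCoprime (a' : ℤ) b') (hg : g ≠ 0)
    (hrad : rad g ∣ a') : (radDvdSet a' b' g).Subsingleton := by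
  intro n₁ hn₁ n₂ hn₂
  have h₁ := eq_one_of_mem_radDvdSet hcop hg hrad hn₁
  have h₂ := eq_one_of_mem_radDvdSet hcop hg hrad hn₂
  have : (a' : ℤ) * n₁ = a' * n₂ := by omega
  exact_mod_cast mul_left_cancel₀ (by positivity) this

theorem radDvdSet_nonempty_iff (ha' : 0 < a') (hcop : IsCoprime (a' : ℤ) b') (hg : g ≠ 0)
    (hrad : rad g ∣ a') : (radDvdSet a' b' g).Nonempty ↔ b' ≤ 0 ∧ (a' : ℤ) ∣ 1 - b' := by
  constructor
  · rintro ⟨n, hn⟩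
    have h₁ := eq_one_of_mem_radDvdSet hcop hg hrad hn
    have : (1 : ℤ) ≤ a' * n := one_le_mul_of_one_le_of_one_le (by omega) (by exact_mod_cast hn.1)
    exact ⟨by omega, n, by omega⟩
  · rintro ⟨hb', k, hk⟩
    have hk0 : 0 < k := pos_of_mul_pos_right (a := (a' : ℤ)) (by omega) (by positivity)
    have hval : (a' : ℤ) * k.toNat + b' = 1 := by
      rw [Int.toNat_of_nonneg hk0.le, ← hk]
      ring
    refine ⟨k.toNat, by omega, by omega, ?_⟩
    rw [hval]
    simp [rad]

end radDvdSet

theorem rho_of_rad_gcd_dvd (a : ℕ) (ha : 0 < a) (b : ℤ)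
    (h : rad (Int.gcd a b) ∣ a / Int.gcd a b) :
    (Rset a b).Subsingleton ∧
    ((Rset a b).Nonempty ↔
      (b / (Int.gcd a b : ℤ) ≤ 0 ∧ (↑(a / Int.gcd a b) : ℤ) ∣ 1 - b / (Int.gcd a b : ℤ))) ∧
    (∀ n ∈ Rset a b, (↑(a / Int.gcd a b) : ℤ) * n + b / (Int.gcd a b : ℤ) = 1) := by
  have hg : Int.gcd a b ≠ 0 := (Int.gcd_pos_of_ne_zero_left b (by omega)).ne'
  have ha' : 0 < a / Int.gcd a b :=
    Nat.div_pos (Nat.le_of_dvd ha (Int.natCast_dvd_natCast.mp (Int.gcd_dvd_left _ _)))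
      (Nat.pos_of_ne_zero hg)
  have hcop : IsCoprime ((a / Int.gcd a b : ℕ) : ℤ) (b / Int.gcd a b) := by
    rw [Int.isCoprime_iff_gcd_eq_one, Int.natCast_ediv]
    exact Int.gcd_div_gcd_div_gcd (Nat.pos_of_ne_zero hg)
  exact ⟨radDvdSet_subsingleton ha' hcop hg h, radDvdSet_nonempty_iff ha' hcop hg h,
    fun _ => eq_one_of_mem_radDvdSet hcop hg h⟩
end

section
/- Let p be a prime, a, k ∈ ℕ, x ∈ ℤ, and set b := p^k + a·x. Then ρ(a,b) = ∞ if p | a and p^{k+1} ∤ a; ρ(a,b) = 1 if x ≤ -p^k/a and (a | p^k - 1 or p^{k+1} | a); and ρ(a,b) = 0 in all other cases. -/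
/-!
Write `g = gcd(a, p^k) = p^v`, `a = g a'`, `b = g b'`. If every prime factor of `g` divides `a'`
(that is, `p ∤ a` or `p^(k+1) ∣ a`), then `a'n + b'` is coprime to `a'`, hence to `g`, so the
condition `rad(a'n + b') ∣ g` forces `a'n + b' = 1`, which has at most one solution `n > 0`, and
one exactly when `a' ∣ 1 - b'` and `1 - b' > 0`. Otherwise `1 ≤ v ≤ k` and `p ∤ a'`;
then `p^t ≡ b' = p^(k-v) + a'x (mod a')` for every `t ≡ k - v (mod φ(a'))`, and each large such
`t` gives a solution `n = (p^t - b')/a'`.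
-/

theorem rad_one : rad 1 = 1 := by
  simp [rad]

theorem rad_prime_pow_dvd {p t v : ℕ} (hp : p.Prime) (hv : v ≠ 0) : rad (p ^ t) ∣ p ^ v := by
  rcases eq_or_ne t 0 with rfl | ht
  · simp [rad_one]
  · rw [rad, Nat.primeFactors_prime_pow ht hp, Finset.prod_singleton]
    exact dvd_pow_self p hv

theorem eq_one_of_rad_dvd_of_isCoprime {m : ℤ} {g d : ℕ} (hm : 0 < m) (hrad : rad m.toNat ∣ g)
    (hg : ∀ q : ℕ, q.Prime → q ∣ g → q ∣ d) (hmd : IsCoprime m d) : m = 1 := by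
  by_contra hne
  have hq : m.toNat.minFac.Prime := Nat.minFac_prime (by omega)
  have hqm : m.toNat.minFac ∣ m.toNat := Nat.minFac_dvd _
  have hqg : m.toNat.minFac ∣ g :=
    (Finset.dvd_prod_of_mem _ (Nat.mem_primeFactors.2 ⟨hq, hqm, by omega⟩)).trans hrad
  have hqm' : (m.toNat.minFac : ℤ) ∣ m := by
    simpa [Int.toNat_of_nonneg hm.le] using Int.natCast_dvd_natCast.2 hqm
  have hunit := hmd.isUnit_of_dvd' hqm' (Int.natCast_dvd_natCast.2 (hg _ hq hqg))
  have := hq.one_lt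
  rcases Int.isUnit_iff.1 hunit with h | h <;> omega

theorem mem_Rset_iff {a a' g : ℕ} {b b' : ℤ} (hg : Int.gcd a b = g) (hg0 : 0 < g)
    (ha : a = g * a') (hb : b = g * b') (n : ℕ) :
    n ∈ Rset a b ↔
      0 < n ∧ 0 < (a' : ℤ) * n + b' ∧ rad ((a' : ℤ) * n + b').toNat ∣ g := by
  subst ha hb
  have hb' : (g : ℤ) * b' / g = b' := Int.mul_ediv_cancel_left _ (by positivity)
  simp only [Rset, Set.mem_ofPred_eq, hg, hb', Nat.mul_div_cancel_left _ hg0]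

theorem mem_Rset_iff_eq_one {a a' g : ℕ} {b b' : ℤ} (hg : Int.gcd a b = g) (hg0 : 0 < g)
    (ha : a = g * a') (hb : b = g * b') (hprime : ∀ q : ℕ, q.Prime → q ∣ g → q ∣ a')
    (n : ℕ) :
    n ∈ Rset a b ↔ 0 < n ∧ (a' : ℤ) * n + b' = 1 := by
  have hcop : IsCoprime b' a' := by
    rw [Int.isCoprime_iff_gcd_eq_one, Int.gcd_comm]
    subst ha hb
    rw [Nat.cast_mul, Int.gcd_mul_left, Int.natAbs_natCast] at hg
    exact (Nat.mul_eq_left hg0.ne').1 hg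
  rw [mem_Rset_iff hg hg0 ha hb]
  constructor
  · rintro ⟨hn, hpos, hrad⟩
    refine ⟨hn, eq_one_of_rad_dvd_of_isCoprime hpos hrad hprime ?_⟩
    simpa only [add_comm] using hcop.add_mul_left_left n
  · rintro ⟨hn, h1⟩
    rw [h1]
    exact ⟨hn, one_pos, by simp [rad_one]⟩

theorem gcd_natCast_add_mul (a m : ℕ) (x : ℤ) : Int.gcd a (m + a * x) = Nat.gcd a m := by
  rw [mul_comm, Int.gcd_add_mul_right_right, Int.gcd_natCast_natCast]

theorem exists_gt_natCast_mul_add_eq_pow {p c s : ℕ} {b : ℤ} (hp : 1 < p) (hpc : p.Coprime c)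
    (hs : (c : ℤ) ∣ p ^ s - b) (N : ℕ) : ∃ n > N, ∃ t, (c : ℤ) * n + b = p ^ t := by
  have hc : 0 < c := Nat.pos_of_ne_zero fun h => by simp [h] at hpc; omega
  set M := c * N + b.toNat
  set t := s + c.totient * M
  have hMt : (M : ℤ) < p ^ t := by
    have hM : M ≤ t := by
      have := Nat.le_mul_of_pos_left M (Nat.totient_pos.2 hc)
      omega
    exact_mod_cast (Nat.lt_pow_self hp).trans_le (Nat.pow_le_pow_right (by omega) hM)
  have hmod : (p : ℤ) ^ t ≡ b [ZMOD c] := by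
    have hφ : (p : ℤ) ^ c.totient ≡ 1 [ZMOD c] := by
      exact_mod_cast Int.natCast_modEq_iff.2 (Nat.ModEq.pow_totient hpc)
    calc (p : ℤ) ^ t = p ^ s * (p ^ c.totient) ^ M := by rw [pow_add, pow_mul]
      _ ≡ p ^ s * 1 ^ M [ZMOD c] := (hφ.pow M).mul_left _
      _ = p ^ s := by ring
      _ ≡ b [ZMOD c] := (Int.modEq_iff_dvd.2 hs).symm
  obtain ⟨q, hq⟩ := Int.modEq_iff_dvd.1 hmod.symm
  have hNq : (N : ℤ) < q := by
    have : (M : ℤ) = c * N + b.toNat := by push_cast [M]; ring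
    have := Int.self_le_toNat b
    exact lt_of_mul_lt_mul_left (a := (c : ℤ)) (by linarith) (by positivity)
  exact ⟨q.toNat, by omega, t, by rw [Int.toNat_of_nonneg (by omega)]; linarith⟩

section

variable {p a k : ℕ}

theorem mem_Rset_of_not_dvd (hp : p.Prime) (hpa : ¬ p ∣ a) (x : ℤ) (n : ℕ) :
    n ∈ Rset a ((p : ℤ) ^ k + a * x) ↔ 0 < n ∧ (a : ℤ) * n = 1 - p ^ k - a * x := by
  have hg : Int.gcd a ((p : ℤ) ^ k + a * x) = 1 := by
    simpa using (gcd_natCast_add_mul a (p ^ k) x).trans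
      (Nat.Coprime.pow_right k (hp.coprime_iff_not_dvd.2 hpa).symm)
  rw [mem_Rset_iff_eq_one hg one_pos (one_mul a).symm (b' := (p : ℤ) ^ k + a * x) (by simp)
    (fun q hq hq1 => absurd (Nat.dvd_one.1 hq1) hq.ne_one)]
  exact and_congr_right fun _ => by constructor <;> intro h <;> linarith

theorem mem_Rset_of_pow_succ_dvd (hp : p.Prime) (ha : 0 < a) (hpa : p ^ (k + 1) ∣ a) (x : ℤ)
    (n : ℕ) : n ∈ Rset a ((p : ℤ) ^ k + a * x) ↔ 0 < n ∧ (n : ℤ) = -x := by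
  obtain ⟨c, rfl⟩ := (pow_dvd_pow p k.le_succ).trans hpa
  have hpc : p ∣ c := by
    rw [pow_succ] at hpa
    exact (Nat.mul_dvd_mul_iff_left (pow_pos hp.pos k)).1 hpa
  have hc : (c : ℤ) ≠ 0 := by
    have : c ≠ 0 := by rintro rfl; simp at ha
    exact_mod_cast this
  have hg : Int.gcd ↑(p ^ k * c) ((p : ℤ) ^ k + ↑(p ^ k * c) * x) = p ^ k := by
    exact_mod_cast (gcd_natCast_add_mul (p ^ k * c) (p ^ k) x).trans
      (Nat.gcd_eq_right (dvd_mul_right _ _))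
  have hprime (q : ℕ) (hq : q.Prime) (hqg : q ∣ p ^ k) : q ∣ c :=
    (Nat.prime_dvd_prime_iff_eq hq hp).1 (hq.dvd_of_dvd_pow hqg) ▸ hpc
  rw [mem_Rset_iff_eq_one hg (pow_pos hp.pos k) rfl (b' := 1 + c * x) (by push_cast; ring)
    hprime]
  refine and_congr_right fun _ => ⟨fun h => ?_, fun h => by rw [h]; ring⟩
  have : (c : ℤ) * (n + x) = 0 := by linarith
  linarith [(mul_eq_zero.1 this).resolve_left hc]

theorem Rset_infinite (hp : p.Prime) (ha : 0 < a) (hpa : p ∣ a) (hpka : ¬ p ^ (k + 1) ∣ a)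
    (x : ℤ) : (Rset a ((p : ℤ) ^ k + a * x)).Infinite := by
  set v := a.factorization p
  set c := ordCompl[p] a
  have hv : v ≠ 0 := (hp.factorization_pos_of_dvd ha.ne' hpa).ne'
  have hvk : v ≤ k := by
    by_contra h
    exact hpka ((pow_dvd_pow p (by omega)).trans (Nat.ordProj_dvd a p))
  have hac : a = p ^ v * c := (Nat.ordProj_mul_ordCompl_eq_self a p).symm
  have hcop : p.Coprime c := Nat.coprime_ordCompl hp ha.ne'
  have hgcd : Nat.gcd a (p ^ k) = p ^ v := by
    rw [hac, ← pow_mul_pow_sub p hvk, Nat.gcd_mul_left, (hcop.symm.pow_right _).gcd_eq_one,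
      mul_one]
  have hg : Int.gcd a ((p : ℤ) ^ k + a * x) = p ^ v := by
    simpa [hgcd] using gcd_natCast_add_mul a (p ^ k) x
  have hb : (p : ℤ) ^ k + a * x = ((p ^ v : ℕ) : ℤ) * (p ^ (k - v) + c * x) := by
    rw [hac]
    push_cast
    rw [← pow_mul_pow_sub (p : ℤ) hvk]
    ring
  refine Set.infinite_of_forall_exists_gt fun N => ?_
  obtain ⟨n, hnN, t, ht⟩ := exists_gt_natCast_mul_add_eq_pow hp.one_lt hcop
    (s := k - v) (b := p ^ (k - v) + c * x)
    (by rw [sub_add_cancel_left]; exact (dvd_mul_right _ _).neg_right) N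
  refine ⟨n, (mem_Rset_iff hg (pow_pos hp.pos v) hac hb n).2 ⟨by omega, ?_, ?_⟩, hnN⟩
  · rw [ht]
    exact pow_pos (by exact_mod_cast hp.pos) t
  · rw [ht, ← Nat.cast_pow, Int.toNat_natCast]
    exact rad_prime_pow_dvd hp hv

end

theorem existsUnique_or_eq_empty {S : Set ℕ} {a : ℕ} {c : ℤ} {P : Prop} (ha : 0 < a)
    (hS : ∀ n, n ∈ S ↔ 0 < n ∧ (a : ℤ) * n = c) (hP : P ↔ 0 < c ∧ (a : ℤ) ∣ c) :
    (P → ∃! n, n ∈ S) ∧ (¬ P → S = ∅) := by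
  have ha' : (a : ℤ) ≠ 0 := by exact_mod_cast ha.ne'
  refine ⟨fun h => ?_, fun h => Set.eq_empty_of_forall_notMem fun n hn => h (hP.2 ?_)⟩
  · obtain ⟨hc, d, rfl⟩ := hP.1 h
    have hd : 0 < d := pos_of_mul_pos_right hc (by positivity)
    refine ⟨d.toNat, (hS _).2 ⟨by omega, by rw [Int.toNat_of_nonneg hd.le]⟩, fun m hm => ?_⟩
    have := mul_left_cancel₀ ha' ((hS m).1 hm).2
    omega
  · obtain ⟨hn, rfl⟩ := (hS n).1 hn
    exact ⟨by positivity, dvd_mul_right _ _⟩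

theorem Nat.not_dvd_pow_sub_one {p k : ℕ} (hp : 1 < p) (hk : k ≠ 0) : ¬ p ∣ p ^ k - 1 := by
  rw [Nat.dvd_sub_iff_right (Nat.one_le_pow _ _ (by omega)) (dvd_pow_self p hk)]
  exact Nat.not_dvd_of_pos_of_lt one_pos hp

theorem rho_prime_power_line_general (p : ℕ) (hp : p.Prime) (a k : ℕ) (ha : 0 < a)
    (x : ℤ) :
    ((p ∣ a ∧ ¬ p ^ (k + 1) ∣ a) → (Rset a ((p : ℤ) ^ k + a * x)).Infinite) ∧
    (((a : ℤ) * x ≤ -(p : ℤ) ^ k ∧ (a ∣ p ^ k - 1 ∨ p ^ (k + 1) ∣ a)) →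
      ∃! n : ℕ, n ∈ Rset a ((p : ℤ) ^ k + a * x)) ∧
    ((¬ (p ∣ a ∧ ¬ p ^ (k + 1) ∣ a) ∧
      ¬ ((a : ℤ) * x ≤ -(p : ℤ) ^ k ∧ (a ∣ p ^ k - 1 ∨ p ^ (k + 1) ∣ a))) →
      Rset a ((p : ℤ) ^ k + a * x) = ∅) := by
  by_cases hC : p ∣ a ∧ ¬ p ^ (k + 1) ∣ a
  · have hk : k ≠ 0 := by rintro rfl; exact hC.2 (by simpa using hC.1)
    refine ⟨fun _ => Rset_infinite hp ha hC.1 hC.2 x, fun ⟨_, hdvd⟩ => ?_,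
      fun h => (h.1 hC).elim⟩
    exact absurd hdvd
      (not_or.2 ⟨fun h => Nat.not_dvd_pow_sub_one hp.one_lt hk (hC.1.trans h), hC.2⟩)
  refine ⟨fun h => (hC h).elim, ?_⟩
  by_cases hA : p ^ (k + 1) ∣ a
  · have hpk : 0 < (p : ℤ) ^ k := pow_pos (by exact_mod_cast hp.pos) k
    have hpka : (p : ℤ) ^ k ≤ a := by
      exact_mod_cast Nat.le_of_dvd ha ((pow_dvd_pow p k.le_succ).trans hA)
    refine (existsUnique_or_eq_empty one_pos (by simpa using mem_Rset_of_pow_succ_dvd hp ha hA x)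
      ?_).imp_right fun h h' => h h'.2
    simp only [hA, or_true, and_true, Nat.cast_one, one_dvd]
    constructor <;> intro h <;> nlinarith
  · refine (existsUnique_or_eq_empty ha (mem_Rset_of_not_dvd hp (fun h => hC ⟨h, hA⟩) x)
      ?_).imp_right fun h h' => h h'.2
    have hcast : ((p ^ k - 1 : ℕ) : ℤ) = (p : ℤ) ^ k - 1 := by
      rw [Nat.cast_pred (pow_pos hp.pos k), Nat.cast_pow]
    simp only [hA, or_false]
    rw [← Int.natCast_dvd_natCast, hcast, dvd_sub_left (dvd_mul_right _ x), dvd_sub_comm]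
    exact and_congr_left' (by constructor <;> intro h <;> linarith)

theorem rho_prime_power_line (p : ℕ) (hp : p.Prime) (a k : ℕ) (ha : 0 < a) (hk : 0 < k)
    (x : ℤ) :
    ((p ∣ a ∧ ¬ p ^ (k + 1) ∣ a) → (Rset a ((p : ℤ) ^ k + a * x)).Infinite) ∧
    (((a : ℤ) * x ≤ -(p : ℤ) ^ k ∧ (a ∣ p ^ k - 1 ∨ p ^ (k + 1) ∣ a)) →
      ∃! n : ℕ, n ∈ Rset a ((p : ℤ) ^ k + a * x)) ∧
    ((¬ (p ∣ a ∧ ¬ p ^ (k + 1) ∣ a) ∧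
      ¬ ((a : ℤ) * x ≤ -(p : ℤ) ^ k ∧ (a ∣ p ^ k - 1 ∨ p ^ (k + 1) ∣ a))) →
      Rset a ((p : ℤ) ^ k + a * x) = ∅) :=
  rho_prime_power_line_general p hp a k ha x
end
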